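/- arXiv:1002.2129 — 9 statements merged into one kernel-verified Lean document; each statement's English description precedes it below -/
import Mathlib

section
/- Let G be a countable group with a free, weakly mixing, p.m.p. action G ↷ (X,μ) on a standard probability space, and let Λ be a non-trivial finite group of measure-preserving automorphisms of (X,μ) acting essentially freely on (X,μ) and satisfying gΛg⁻¹ = Λ for all g ∈ G (inside the group of measure-preserving automorphisms of (X,μ)). Then the action of G₁/(G₁∩Λ) on X/Λ fails to be cocycle superrigid with countable targets for some finite index subgroup G₁ ≤ G. Concretely: there exist a finite index subgroup G₁ ≤ G, a countable group 𝒢, and a measurable map ω : G₁ × X → 𝒢 satisfying (a) the cocycle identity ω(gh,x) = ω(g,h·x)ω(h,x) for all g,h ∈ G₁ and a.e. x, (b) ω(g,λ·x) = ω(g,x) for all λ ∈ Λ, g ∈ G₁ and a.e. x, and (c) ω(gλ,x) = ω(g,x) for all λ ∈ G₁∩Λ, g ∈ G₁ and a.e. x, such that there exist NO group homomorphism δ : G₁ → 𝒢 that is trivial on G₁∩Λ and NO measurable map φ : X → 𝒢 with φ(λ·x) = φ(x) for all λ ∈ Λ and a.e. x, satisfying ω(g,x) = φ(g·x)δ(g)φ(x)⁻¹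 for all g ∈ G₁ and almost every x ∈ X. -/
/-!
Let `G₁` be the finite index subgroup of `G` acting by automorphisms commuting with `Λ`. Fix a
Borel embedding `e : X → ℝ` and let `ψ x ∈ Λ` move `x` to the `e`-smallest point of its orbit
`Λ x`; on free orbits `ψ (s x) = ψ x * s⁻¹`. The cocycle `ω(g, x) = ψ(g x) g ψ(x)⁻¹`, with values
in the countable group generated by `Λ` and `G`, is then `Λ`-invariant in both variables. If
`ω(g, x) = φ(g x) δ(g) φ(x)⁻¹`, then `η = φ⁻¹ ψ` satisfies `η(k x) = δ(k) η(x) k⁻¹` for `k ∈ G₁`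
and `η(s x) = η(x) s⁻¹` for `s ∈ Λ`. Weak mixing passes to the finite index subgroup `G₁`, so
the first relation forces the countably valued `η` to be essentially constant, which the second
relation forbids for `s ≠ 1`.
-/

open MeasureTheory Filter Pointwise

/-- The `Λ`-relative cocycle `ω : G₁ × X → 𝒢` (descending to `G₁/(G₁∩Λ) × X/Λ`) admits no
untwisting to a group morphism by a `Λ`-invariant measurable map, i.e. it witnesses the
failure of cocycle superrigidity of `G₁/(G₁∩Λ) ↷ X/Λ` with the countable target `𝒢`. -/
def IsBadRelativeCocycle {X : Type} [MeasurableSpace X] (μ : Measure X)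
    {G : Type} [Group G] [MulAction G X] (Λ : Subgroup (Equiv.Perm X))
    (G₁ : Subgroup G) (𝒢 : Type) [Group 𝒢] (ω : G₁ → X → 𝒢) : Prop :=
  (∀ (g : G₁) (c : 𝒢), MeasurableSet {x : X | ω g x = c}) ∧
  -- (a) the cocycle identity
  (∀ g h : G₁, ∀ᵐ x ∂μ, ω (g * h) x = ω g ((h : G) • x) * ω h x) ∧
  -- (b) invariance in the space variable under `Λ`
  (∀ g : G₁, ∀ s ∈ Λ, ∀ᵐ x ∂μ, ω g (s x) = ω g x) ∧
  -- (c) invariance in the group variable under `G₁ ∩ Λ`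
  (∀ g h : G₁, MulAction.toPermHom G X h ∈ Λ → ∀ᵐ x ∂μ, ω (g * h) x = ω g x) ∧
  -- no untwisting to a group morphism, compatibly with `Λ`
  ¬ ∃ (δ : G₁ →* 𝒢) (φ : X → 𝒢),
      (∀ h : G₁, MulAction.toPermHom G X h ∈ Λ → δ h = 1) ∧
      (∀ c : 𝒢, MeasurableSet {x : X | φ x = c}) ∧
      (∀ s ∈ Λ, ∀ᵐ x ∂μ, φ (s x) = φ x) ∧
      (∀ g : G₁, ∀ᵐ x ∂μ, ω g x = φ ((g : G) • x) * δ g * (φ x)⁻¹)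

open Topology Set ENNReal Equiv MulAction

section GroupTheory

variable {G N : Type*} [Group G] [Group N]

theorem Subgroup.finiteIndex_comap_centralizer (f : G →* N) (Λ : Subgroup N) [Finite Λ]
    (hf : ∀ g, f g ∈ normalizer (Λ : Set N)) :
    ((centralizer (Λ : Set N)).comap f).FiniteIndex := by
  let ρ : G →* MulAut Λ := Λ.normalizerMonoidHom.comp (f.codRestrict _ hf)
  refine finiteIndex_of_le (H := ρ.ker) fun g hg => ?_
  rw [mem_comap, mem_centralizer_iff]
  intro s hs
  have := congrArg Subtype.val (DFunLike.congr_fun hg ⟨s, hs⟩)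
  simp only [ρ, MonoidHom.coe_comp, Function.comp_apply, MonoidHom.codRestrict_apply,
    normalizerMonoidHom_apply_apply_coe, MulAut.one_apply] at this
  exact (mul_inv_eq_iff_eq_mul.mp this).symm

theorem Subgroup.countable_sup_range (Λ : Subgroup N) [Countable Λ] [Countable G] (f : G →* N)
    (hf : ∀ g, f g ∈ normalizer (Λ : Set N)) : Countable ↥(Λ ⊔ f.range) := by
  have hle : f.range ≤ normalizer (Λ : Set N) := by rintro _ ⟨g, rfl⟩; exact hf g
  rw [← SetLike.coe_sort_coe, coe_mul_of_right_le_normalizer_left _ _ hle, ← image2_mul,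
    countable_coe_iff]
  exact (to_countable _).image2 (countable_range f) _

end GroupTheory

theorem measurableSet_setOf_apply₂_eq {X α β γ : Type*} [MeasurableSpace X] {f : X → α}
    {g : X → β} (hf : (range f).Countable) (hg : (range g).Countable)
    (hfm : ∀ a, MeasurableSet {x | f x = a}) (hgm : ∀ b, MeasurableSet {x | g x = b})
    (F : α → β → γ) (c : γ) : MeasurableSet {x | F (f x) (g x) = c} := by
  have : {x | F (f x) (g x) = c} =
      ⋃ a ∈ range f, ⋃ b ∈ range g, {x | f x = a} ∩ {x | g x = b} ∩ {_x | F a b = c} := by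
    ext x
    simp only [mem_ofPred_eq, mem_iUnion, mem_inter_iff, mem_range, exists_prop]
    exact ⟨fun h => ⟨_, ⟨x, rfl⟩, _, ⟨x, rfl⟩, ⟨rfl, rfl⟩, h⟩,
      by rintro ⟨_, -, _, -, ⟨rfl, rfl⟩, h⟩; exact h⟩
  rw [this]
  exact .biUnion hf fun a _ => .biUnion hg fun b _ => ((hfm a).inter (hgm b)).inter (.const _)

section Mixing

variable {X G Y : Type*} [MeasurableSpace X] {μ : Measure X} [Group G] [MulAction G X]

def IsMixingSequence (μ : Measure X) (gseq : ℕ → G) : Prop :=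
  ∀ U V : Set X, MeasurableSet U → MeasurableSet V →
    Tendsto (fun n => μ (gseq n • U ∩ V)) atTop (𝓝 (μ U * μ V))

theorem IsMixingSequence.exists_of_finiteIndex [MeasurableConstSMul G X]
    [SMulInvariantMeasure G X μ] {gseq : ℕ → G} (hmix : IsMixingSequence μ gseq)
    (G₁ : Subgroup G) [G₁.FiniteIndex] :
    ∃ kseq : ℕ → G₁, IsMixingSequence μ fun n => (kseq n : G) := by
  -- infinitely many `gseq n` lie in one coset `t G₁`; shifting them by `t⁻¹` lands in `G₁`
  obtain ⟨q, hq⟩ := Finite.exists_infinite_fiber fun n => (gseq n : G ⧸ G₁)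
  obtain ⟨t, rfl⟩ := QuotientGroup.mk_surjective q
  have hinf : {n | (gseq n : G ⧸ G₁) = t}.Infinite := infinite_coe_iff.mp hq
  set m := Nat.nth fun n => (gseq n : G ⧸ G₁) = t
  refine ⟨fun n => ⟨t⁻¹ * gseq (m n), QuotientGroup.eq.mp (Nat.nth_mem_of_infinite hinf n).symm⟩,
    fun U V hU hV => ?_⟩
  have hshift : ∀ n, μ ((t⁻¹ * gseq (m n)) • U ∩ V) = μ (gseq (m n) • U ∩ t • V) := fun n => by
    rw [← measure_smul μ t, smul_set_inter, smul_smul, mul_inv_cancel_left]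
  simp only [hshift]
  rw [← measure_smul μ t V]
  exact (hmix U _ hU (hV.const_smul t)).comp (Nat.nth_strictMono hinf).tendsto_atTop

theorem IsMixingSequence.measure_eq_one [IsProbabilityMeasure μ] {gseq : ℕ → G}
    (hmix : IsMixingSequence μ gseq) {A : Set X} (hA : MeasurableSet A) (hA₀ : μ A ≠ 0)
    (hgA : ∀ n, μ (gseq n • A ∩ A) = 0 ∨ μ (gseq n • A ∩ A) = μ A) : μ A = 1 := by
  have hlim : μ A * μ A ∈ ({0, μ A} : Set ℝ≥0∞) := by
    have hclosed : IsClosed ({0, μ A} : Set ℝ≥0∞) := ((finite_singleton _).insert 0).isClosed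
    exact hclosed.mem_of_tendsto (hmix A A hA hA) (Eventually.of_forall hgA)
  rcases hlim with h | h
  · exact absurd (mul_self_eq_zero.mp h) hA₀
  · exact (ENNReal.mul_eq_left hA₀ (measure_ne_top μ A)).mp h

theorem measure_smul_fiber_inter_fiber [SMulInvariantMeasure G X μ] {f : X → Y} {τ : Y → Y}
    (hτ : Function.Injective τ) {g : G} (hf : ∀ᵐ x ∂μ, f (g • x) = τ (f x)) (c : Y) :
    μ (g • {x | f x = c} ∩ {x | f x = c}) = 0 ∨
      μ (g • {x | f x = c} ∩ {x | f x = c}) = μ {x | f x = c} := by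
  have hfg : ∀ᵐ x ∂μ, f x = τ (f (g⁻¹ • x)) := by
    filter_upwards [tendsto_smul_ae μ g⁻¹ hf] with x hx
    simpa only [mem_preimage, mem_ofPred_eq, smul_inv_smul] using hx
  have htranslate : (g • {x | f x = c} : Set X) =ᵐ[μ] {x | f x = τ c} := by
    refine eventuallyEq_set.mpr ?_
    filter_upwards [hfg] with x hx
    rw [mem_smul_set_iff_inv_smul_mem, mem_ofPred_eq, hx, hτ.eq_iff]
  rw [measure_congr (htranslate.inter (ae_eq_refl {x | f x = c}))]
  by_cases hc : τ c = c
  · simp [hc]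
  · left
    convert measure_empty (μ := μ)
    ext x
    simp only [mem_inter_iff, mem_ofPred_eq, mem_empty_iff_false, iff_false, not_and]
    rintro h rfl
    exact hc h.symm

theorem exists_measure_fiber_ne_zero [NeZero μ] {f : X → Y} (hf : (range f).Countable) :
    ∃ c, μ {x | f x = c} ≠ 0 := by
  by_contra! h
  have huniv : (univ : Set X) = ⋃ c ∈ range f, {x | f x = c} := by
    ext x; simp
  exact NeZero.ne μ (Measure.measure_univ_eq_zero.mp
    (huniv ▸ (measure_biUnion_null_iff hf).mpr fun c _ => h c))

theorem IsMixingSequence.ae_eq_const [IsProbabilityMeasure μ] [SMulInvariantMeasure G X μ]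
    {gseq : ℕ → G} (hmix : IsMixingSequence μ gseq) {f : X → Y} (hfc : (range f).Countable)
    (hfm : ∀ c, MeasurableSet {x | f x = c}) (τ : ℕ → Y → Y) (hτ : ∀ n, Function.Injective (τ n))
    (hf : ∀ n, ∀ᵐ x ∂μ, f (gseq n • x) = τ n (f x)) : ∃ c, ∀ᵐ x ∂μ, f x = c := by
  obtain ⟨c, hc⟩ := exists_measure_fiber_ne_zero (μ := μ) hfc
  have hA : μ {x | f x = c} = 1 :=
    hmix.measure_eq_one (hfm c) hc fun n => measure_smul_fiber_inter_fiber (hτ n) (hf n) c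
  exact ⟨c, (prob_compl_eq_zero_iff (hfm c)).mpr hA⟩

theorem eq_one_of_ae_apply_eq_mul {K : Type*} [Group K] [NeZero μ] {f : X → K} {s : X → X}
    (hs : Measure.QuasiMeasurePreserving s μ μ) {a c : K} (hfs : ∀ᵐ x ∂μ, f (s x) = f x * a)
    (hfc : ∀ᵐ x ∂μ, f x = c) : a = 1 := by
  obtain ⟨x, hx, hsx, hfsx⟩ := (hfc.and ((hs.ae hfc).and hfs)).exists
  rw [hx, hsx] at hfsx
  exact mul_eq_left.mp hfsx.symm

end Mixing

section OrbitArgmin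

variable {X : Type*} (Λ : Subgroup (Perm X)) (e : X → ℝ)

def IsOrbitArgmin (s : Perm X) (x : X) : Prop :=
  ∀ t ∈ Λ, t ≠ s → e (s x) < e (t x)

open Classical in
/-- The value `1` off the points with a strict minimiser is junk; those points form a null set
when `Λ` acts essentially freely. -/
noncomputable def orbitArgmin (x : X) : Perm X :=
  if h : ∃ s ∈ Λ, IsOrbitArgmin Λ e s x then h.choose else 1

variable {Λ e}

theorem IsOrbitArgmin.eq {s t : Perm X} {x : X} (hs : s ∈ Λ) (ht : t ∈ Λ)
    (hsx : IsOrbitArgmin Λ e s x) (htx : IsOrbitArgmin Λ e t x) : s = t := by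
  by_contra hne
  exact lt_asymm (hsx t ht (Ne.symm hne)) (htx s hs hne)

theorem IsOrbitArgmin.mul_inv_apply {s u : Perm X} {x : X} (hu : u ∈ Λ)
    (h : IsOrbitArgmin Λ e s x) :
    IsOrbitArgmin Λ e (s * u⁻¹) (u x) := by
  intro t ht hne
  rw [Perm.mul_apply, Perm.coe_inv, symm_apply_apply, ← Perm.mul_apply]
  exact h (t * u) (Λ.mul_mem ht hu) fun h' => hne (by rw [← h', mul_inv_cancel_right])

theorem orbitArgmin_mem (x : X) : orbitArgmin Λ e x ∈ Λ := by
  unfold orbitArgmin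
  split_ifs with h
  · exact h.choose_spec.1
  · exact Λ.one_mem

theorem orbitArgmin_eq {s : Perm X} {x : X} (hs : s ∈ Λ) (h : IsOrbitArgmin Λ e s x) :
    orbitArgmin Λ e x = s := by
  have hex : ∃ s ∈ Λ, IsOrbitArgmin Λ e s x := ⟨s, hs, h⟩
  rw [orbitArgmin, dif_pos hex]
  exact hex.choose_spec.2.eq hex.choose_spec.1 hs h

theorem orbitArgmin_eq_iff {c : Perm X} {x : X} (hc : c ∈ Λ) :
    orbitArgmin Λ e x = c ↔
      IsOrbitArgmin Λ e c x ∨ (¬ ∃ s ∈ Λ, IsOrbitArgmin Λ e s x) ∧ c = 1 := by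
  by_cases hx : ∃ s ∈ Λ, IsOrbitArgmin Λ e s x
  · obtain ⟨s, hs, h⟩ := hx
    rw [orbitArgmin_eq hs h]
    exact ⟨fun hsc => .inl (hsc ▸ h),
      fun hc' => ((hc'.resolve_right fun h' => h'.1 ⟨s, hs, h⟩).eq hc hs h).symm⟩
  · rw [orbitArgmin, dif_neg hx, eq_comm]
    simp only [hx, not_false_eq_true, true_and, iff_or_self]
    exact fun h => (hx ⟨c, hc, h⟩).elim

theorem orbitArgmin_apply {u : Perm X} {x : X} (hu : u ∈ Λ)
    (hx : ∃ s ∈ Λ, IsOrbitArgmin Λ e s x) : orbitArgmin Λ e (u x) = orbitArgmin Λ e x * u⁻¹ := by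
  obtain ⟨s, hs, h⟩ := hx
  rw [orbitArgmin_eq hs h, orbitArgmin_eq (Λ.mul_mem hs (Λ.inv_mem hu)) (h.mul_inv_apply hu)]

theorem exists_isOrbitArgmin (hΛ : (Λ : Set (Perm X)).Finite) (he : Function.Injective e) {x : X}
    (hx : ∀ u ∈ Λ, u x = x → u = 1) : ∃ s ∈ Λ, IsOrbitArgmin Λ e s x := by
  obtain ⟨s, hs, hmin⟩ := exists_min_image (Λ : Set (Perm X)) (fun t => e (t x)) hΛ ⟨1, Λ.one_mem⟩
  refine ⟨s, hs, fun t ht hne => (hmin t ht).lt_of_ne fun heq => hne ?_⟩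
  have hfix : (s⁻¹ * t) x = x := by
    rw [Perm.mul_apply, ← he heq, Perm.coe_inv, symm_apply_apply]
  exact (inv_mul_eq_one.mp (hx _ (Λ.mul_mem (Λ.inv_mem hs) ht) hfix)).symm

variable [MeasurableSpace X]

theorem measurableSet_isOrbitArgmin (hΛ : (Λ : Set (Perm X)).Countable) (he : Measurable e)
    (hΛm : ∀ s ∈ Λ, Measurable s) {s : Perm X} (hs : s ∈ Λ) :
    MeasurableSet {x | IsOrbitArgmin Λ e s x} := by
  have : {x | IsOrbitArgmin Λ e s x} = ⋂ t ∈ Λ, {x | t ≠ s → e (s x) < e (t x)} := by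
    ext; simp [IsOrbitArgmin]
  rw [this]
  refine .biInter hΛ fun t ht => ?_
  by_cases hts : t = s
  · simp [hts]
  · simpa [hts] using measurableSet_lt (he.comp (hΛm s hs)) (he.comp (hΛm t ht))

theorem measurableSet_orbitArgmin_eq (hΛ : (Λ : Set (Perm X)).Countable) (he : Measurable e)
    (hΛm : ∀ s ∈ Λ, Measurable s) (c : Perm X) : MeasurableSet {x | orbitArgmin Λ e x = c} := by
  by_cases hc : c ∈ Λ
  · have hD : MeasurableSet {x | ∃ s ∈ Λ, IsOrbitArgmin Λ e s x} := by
      convert MeasurableSet.biUnion hΛ fun s hs => measurableSet_isOrbitArgmin hΛ he hΛm hs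
      ext; simp
    have : {x | orbitArgmin Λ e x = c} =
        {x | IsOrbitArgmin Λ e c x} ∪ ({x | ∃ s ∈ Λ, IsOrbitArgmin Λ e s x}ᶜ ∩ {_x | c = 1}) := by
      ext x
      simp only [mem_ofPred_eq, mem_union, mem_inter_iff, mem_compl_iff, orbitArgmin_eq_iff hc]
    rw [this]
    exact (measurableSet_isOrbitArgmin hΛ he hΛm hc).union (hD.compl.inter (.const _))
  · convert MeasurableSet.empty
    exact eq_empty_of_forall_notMem fun x hx => hc (hx ▸ orbitArgmin_mem x)

theorem ae_orbitArgmin_apply {μ : Measure X} (hΛ : (Λ : Set (Perm X)).Finite)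
    (he : Function.Injective e) (hfree : ∀ s ∈ Λ, s ≠ 1 → μ {x | s x = x} = 0) :
    ∀ᵐ x ∂μ, ∀ u ∈ Λ, orbitArgmin Λ e (u x) = orbitArgmin Λ e x * u⁻¹ := by
  have hfree_ae : ∀ᵐ x ∂μ, ∀ u ∈ Λ, u x = x → u = 1 := by
    refine (ae_ball_iff hΛ.countable).mpr fun u hu => ?_
    by_cases h1 : u = 1
    · exact Eventually.of_forall fun _ _ => h1
    · filter_upwards [measure_eq_zero_iff_ae_notMem.mp (hfree u hu h1)] with x hx hux
      exact (hx hux).elim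
  filter_upwards [hfree_ae] with x hx u hu
  exact orbitArgmin_apply hu (exists_isOrbitArgmin hΛ he hx)

end OrbitArgmin

section SectionCocycle

variable {X G : Type*} [Group G] [MulAction G X]

def sectionCocycle (ψ : X → Perm X) (g : G) (x : X) : Perm X :=
  ψ (g • x) * toPermHom G X g * (ψ x)⁻¹

variable {ψ : X → Perm X}

theorem sectionCocycle_mul (g h : G) (x : X) :
    sectionCocycle ψ (g * h) x = sectionCocycle ψ g (h • x) * sectionCocycle ψ h x := by
  simp only [sectionCocycle, map_mul, mul_smul, mul_assoc, inv_mul_cancel_left]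

theorem sectionCocycle_apply_of_commute {g : G} {s : Perm X} {x : X}
    (hgs : Commute (toPermHom G X g) s) (hx : ψ (s x) = ψ x * s⁻¹)
    (hgx : ψ (s (g • x)) = ψ (g • x) * s⁻¹) : sectionCocycle ψ g (s x) = sectionCocycle ψ g x := by
  have hsmul : g • s x = s (g • x) := congrArg (· x) hgs.eq
  rw [sectionCocycle, sectionCocycle, hsmul, hgx, hx, mul_inv_rev, inv_inv]
  calc ψ (g • x) * s⁻¹ * toPermHom G X g * (s * (ψ x)⁻¹)
      = ψ (g • x) * (s⁻¹ * toPermHom G X g * s) * (ψ x)⁻¹ := by group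
    _ = ψ (g • x) * toPermHom G X g * (ψ x)⁻¹ := by rw [hgs.symm.inv_mul_cancel]

theorem sectionCocycle_eq_one {h : G} {x : X}
    (hx : ψ (h • x) = ψ x * (toPermHom G X h)⁻¹) : sectionCocycle ψ h x = 1 := by
  simp [sectionCocycle, hx]

variable [MeasurableSpace X]

theorem measurableSet_sectionCocycle_eq [MeasurableConstSMul G X] (hψc : (range ψ).Countable)
    (hψm : ∀ c, MeasurableSet {x | ψ x = c}) (g : G) (c : Perm X) :
    MeasurableSet {x | sectionCocycle ψ g x = c} :=
  measurableSet_setOf_apply₂_eq (f := fun x => ψ (g • x)) (hψc.mono (range_comp_subset_range _ _))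
    hψc (fun a => measurable_const_smul g (hψm a)) hψm (fun a b => a * toPermHom G X g * b⁻¹) c

end SectionCocycle

section Superrigidity

variable {X G : Type} [MeasurableSpace X] {μ : Measure X} [IsProbabilityMeasure μ] [Group G]
  [MulAction G X] [MeasurableConstSMul G X] [SMulInvariantMeasure G X μ] {gseq : ℕ → G}
  {G₁ : Subgroup G} [G₁.FiniteIndex] {H : Subgroup (Perm X)} [Countable H] {ψ : X → Perm X}

theorem sectionCocycle_not_cohomologous (hmix : IsMixingSequence μ gseq)
    (hψc : (range ψ).Countable) (hψm : ∀ c, MeasurableSet {x | ψ x = c}) {s : Perm X}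
    (hs₁ : s ≠ 1) (hs : Measure.QuasiMeasurePreserving s μ μ)
    (hψs : ∀ᵐ x ∂μ, ψ (s x) = ψ x * s⁻¹) (δ : G₁ →* H) (φ : X → H)
    (hφm : ∀ c, MeasurableSet {x | φ x = c}) (hφs : ∀ᵐ x ∂μ, φ (s x) = φ x)
    (hδφ : ∀ k : G₁, ∀ᵐ x ∂μ,
      sectionCocycle ψ (k : G) x = (φ ((k : G) • x) : Perm X) * δ k * (φ x : Perm X)⁻¹) :
    False := by
  set η : X → Perm X := fun x => (φ x : Perm X)⁻¹ * ψ x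
  have hηc : (range η).Countable :=
    ((range φ).to_countable.image2 hψc fun a b => (a : Perm X)⁻¹ * b).mono <| by
      rintro _ ⟨x, rfl⟩
      exact mem_image2_of_mem (mem_range_self x) (mem_range_self x)
  have hηm := measurableSet_setOf_apply₂_eq (range φ).to_countable hψc hφm hψm
    fun a b => (a : Perm X)⁻¹ * b
  have hηk : ∀ k : G₁, ∀ᵐ x ∂μ, η ((k : G) • x) = δ k * η x * (toPermHom G X k)⁻¹ := by
    intro k
    filter_upwards [hδφ k] with x hx
    have hψk : ψ ((k : G) • x) = φ ((k : G) • x) * δ k * (φ x : Perm X)⁻¹ * ψ x *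
        (toPermHom G X k)⁻¹ := by
      rw [← hx, sectionCocycle]; group
    simp only [η, hψk]
    group
  obtain ⟨kseq, hkmix⟩ := hmix.exists_of_finiteIndex G₁
  obtain ⟨c, hc⟩ := hkmix.ae_eq_const hηc hηm
    (fun n σ => δ (kseq n) * σ * (toPermHom G X (kseq n))⁻¹)
    (fun n => (mul_left_injective _).comp (mul_right_injective _)) fun n => hηk (kseq n)
  have hηs : ∀ᵐ x ∂μ, η (s x) = η x * s⁻¹ := by
    filter_upwards [hψs, hφs] with x h₁ h₂
    simp only [η, h₁, h₂, mul_assoc]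
  exact hs₁ (inv_eq_one.mp (eq_one_of_ae_apply_eq_mul hs hηs hc))

theorem isBadRelativeCocycle_sectionCocycle (hmix : IsMixingSequence μ gseq)
    {Λ : Subgroup (Perm X)} (hΛ : Λ ≠ ⊥) (hΛmp : ∀ s ∈ Λ, MeasurePreserving s μ μ)
    (hG₁ : G₁ ≤ (Subgroup.centralizer (Λ : Set (Perm X))).comap (toPermHom G X))
    (hψH : ∀ x, ψ x ∈ H) (hGH : ∀ g, toPermHom G X g ∈ H) (hψc : (range ψ).Countable)
    (hψm : ∀ c, MeasurableSet {x | ψ x = c}) (hψ : ∀ᵐ x ∂μ, ∀ s ∈ Λ, ψ (s x) = ψ x * s⁻¹) :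
    IsBadRelativeCocycle μ Λ G₁ H fun g x =>
      ⟨sectionCocycle ψ (g : G) x, H.mul_mem (H.mul_mem (hψH _) (hGH g)) (H.inv_mem (hψH x))⟩ := by
  have hcomm : ∀ (g : G₁), ∀ s ∈ Λ, Commute (toPermHom G X g) s := fun g s hs =>
    ((Subgroup.mem_centralizer_iff.mp (hG₁ g.2)) s hs).symm
  have hψg : ∀ g : G, ∀ᵐ x ∂μ, ∀ s ∈ Λ, ψ (s x) = ψ x * s⁻¹ ∧ ψ (s (g • x)) = ψ (g • x) * s⁻¹ :=
    fun g => by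
      filter_upwards [hψ, tendsto_smul_ae μ g hψ] with x hx hgx s hs
      exact ⟨hx s hs, hgx s hs⟩
  refine ⟨fun g c => ?_, fun g h => ?_, fun g s hs => ?_, fun g h hh => ?_, ?_⟩
  · simpa only [Subtype.ext_iff] using measurableSet_sectionCocycle_eq hψc hψm (g : G) c
  · exact Eventually.of_forall fun x => Subtype.ext (sectionCocycle_mul _ _ x)
  · filter_upwards [hψg g] with x hx
    exact Subtype.ext (sectionCocycle_apply_of_commute (hcomm g s hs) (hx s hs).1 (hx s hs).2)
  · filter_upwards [hψg g] with x hx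
    obtain ⟨hx₁, hx₂⟩ := hx _ hh
    refine Subtype.ext ?_
    change sectionCocycle ψ ((g : G) * h) x = sectionCocycle ψ g x
    rw [sectionCocycle_mul, sectionCocycle_eq_one hx₁, mul_one]
    exact sectionCocycle_apply_of_commute (hcomm g _ hh) hx₁ hx₂
  · rintro ⟨δ, φ, -, hφm, hφΛ, hδφ⟩
    obtain ⟨⟨s, hs⟩, hs₁⟩ := (Subgroup.ne_bot_iff_exists_ne_one).mp hΛ
    refine sectionCocycle_not_cohomologous hmix hψc hψm (s := s) (fun h => hs₁ (Subtype.ext h))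
      (hΛmp s hs).quasiMeasurePreserving (hψ.mono fun x hx => hx s hs) δ φ hφm (hφΛ s hs)
      fun k => ?_
    filter_upwards [hδφ k] with x hx
    simpa using congrArg Subtype.val hx

end Superrigidity

theorem quotient_action_not_cocycle_superrigid_general
    (X : Type) [MeasurableSpace X] [StandardBorelSpace X]
    (μ : Measure X) [IsProbabilityMeasure μ]
    (G : Type) [Group G] [Countable G] [MulAction G X]
    (hpmp : ∀ g : G, MeasurePreserving (fun x : X => g • x) μ μ)
    (hwm : ∃ gseq : ℕ → G, ∀ U V : Set X, MeasurableSet U → MeasurableSet V →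
      Tendsto (fun n => μ (gseq n • U ∩ V)) atTop (nhds (μ U * μ V)))
    (Λ : Subgroup (Equiv.Perm X))
    (hΛfin : (Λ : Set (Equiv.Perm X)).Finite) (hΛnontriv : Λ ≠ ⊥)
    (hΛmeas : ∀ s ∈ Λ, Measurable s ∧ MeasurePreserving s μ μ)
    (hΛfree : ∀ s ∈ Λ, s ≠ 1 → μ {x : X | s x = x} = 0)
    (hΛnorm : ∀ (g : G) (σ : Equiv.Perm X),
      σ ∈ Λ ↔ MulAction.toPermHom G X g * σ * (MulAction.toPermHom G X g)⁻¹ ∈ Λ) :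
    ∃ G₁ : Subgroup G, G₁.FiniteIndex ∧
      ∃ (𝒢 : Type) (h𝒢 : Group 𝒢), Countable 𝒢 ∧
        ∃ ω : G₁ → X → 𝒢, @IsBadRelativeCocycle X _ μ G _ _ Λ G₁ 𝒢 h𝒢 ω := by
  obtain ⟨e, he⟩ := exists_measurableEmbedding_real X
  obtain ⟨gseq, hmix⟩ := hwm
  have : MeasurableConstSMul G X := ⟨fun g => (hpmp g).measurable⟩
  have : SMulInvariantMeasure G X μ :=
    ⟨fun g _ hs => (hpmp g).measure_preimage hs.nullMeasurableSet⟩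
  have : Finite Λ := hΛfin.to_subtype
  have hnorm (g : G) : toPermHom G X g ∈ Subgroup.normalizer (Λ : Set (Perm X)) :=
    Subgroup.mem_normalizer_iff.mpr (hΛnorm g)
  have hG₁ := Subgroup.finiteIndex_comap_centralizer _ Λ hnorm
  have hH := Subgroup.countable_sup_range Λ _ hnorm
  exact ⟨_, hG₁, _, inferInstance, hH, _,
    isBadRelativeCocycle_sectionCocycle hmix hΛnontriv (fun s hs => (hΛmeas s hs).2) le_rfl
      (fun x => Subgroup.mem_sup_left (orbitArgmin_mem x))
      (fun g => Subgroup.mem_sup_right (MonoidHom.mem_range.mpr ⟨g, rfl⟩))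
      (hΛfin.countable.mono (range_subset_iff.mpr orbitArgmin_mem))
      (measurableSet_orbitArgmin_eq hΛfin.countable he.measurable fun s hs => (hΛmeas s hs).1)
      (ae_orbitArgmin_apply hΛfin he.injective hΛfree)⟩

/-- Let `G ↷ (X,μ)` be a free, weakly mixing, p.m.p. action of a countable
group on a standard probability space and let `Λ` be a non-trivial finite group of m.p.
automorphisms of `(X,μ)` acting essentially freely, with `gΛg⁻¹ = Λ` for all `g ∈ G`.
Then for some finite index subgroup `G₁ ≤ G`, the action `G₁/(G₁∩Λ) ↷ X/Λ` fails to be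
cocycle superrigid with countable targets. -/
theorem quotient_action_not_cocycle_superrigid
    (X : Type) [MeasurableSpace X] [StandardBorelSpace X]
    (μ : Measure X) [IsProbabilityMeasure μ]
    (G : Type) [Group G] [Countable G] [MulAction G X]
    (hmeas : ∀ g : G, Measurable fun x : X => g • x)
    (hpmp : ∀ g : G, MeasurePreserving (fun x : X => g • x) μ μ)
    (hfree : ∀ g : G, g ≠ 1 → μ {x : X | g • x = x} = 0)
    (hwm : ∃ gseq : ℕ → G, ∀ U V : Set X, MeasurableSet U → MeasurableSet V →
      Tendsto (fun n => μ (gseq n • U ∩ V)) atTop (nhds (μ U * μ V)))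
    (Λ : Subgroup (Equiv.Perm X))
    (hΛfin : (Λ : Set (Equiv.Perm X)).Finite) (hΛnontriv : Λ ≠ ⊥)
    (hΛmeas : ∀ s ∈ Λ, Measurable s ∧ MeasurePreserving s μ μ)
    (hΛfree : ∀ s ∈ Λ, s ≠ 1 → μ {x : X | s x = x} = 0)
    (hΛnorm : ∀ (g : G) (σ : Equiv.Perm X),
      σ ∈ Λ ↔ MulAction.toPermHom G X g * σ * (MulAction.toPermHom G X g)⁻¹ ∈ Λ) :
    ∃ G₁ : Subgroup G, G₁.FiniteIndex ∧
      ∃ (𝒢 : Type) (h𝒢 : Group 𝒢), Countable 𝒢 ∧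
        ∃ ω : G₁ → X → 𝒢, @IsBadRelativeCocycle X _ μ G _ _ Λ G₁ 𝒢 h𝒢 ω :=
  quotient_action_not_cocycle_superrigid_general X μ G hpmp hwm Λ hΛfin hΛnontriv hΛmeas hΛfree
    hΛnorm
end

section
/- Let I be a countable index set and let (pᵢ)_{i∈I} be a family of prime numbers. For a positive integer m, the following are equivalent: (1) there exists a finite subgroup G of the direct product group ∏_{i∈I} ℤ/pᵢℤ with |G| = m; (2) there exists a finite subset J ⊆ I such that m divides ∏_{i∈J} pᵢ. -/
/-!
A finite subgroup `G` of `∏ᵢ ℤ/pᵢℤ` is separated by finitely many coordinates `J`, so `G` embeds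
into `∏_{i ∈ J} ℤ/pᵢℤ` and Lagrange gives `|G| ∣ ∏_{i ∈ J} pᵢ`. Conversely, a divisor of a
product of primes is a sub-product `∏_{i ∈ K} pᵢ`, and the elements supported on `K` form a
subgroup of exactly that order.
-/

open Function

theorem Finset.exists_subset_prod_eq_of_dvd_prod_primes {ι : Type*} {p : ι → ℕ} {J : Finset ι}
    (hp : ∀ i ∈ J, (p i).Prime) {m : ℕ} (hm : m ∣ ∏ i ∈ J, p i) :
    ∃ K ⊆ J, ∏ i ∈ K, p i = m := by
  classical
  induction J using Finset.induction generalizing m with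
  | empty => exact ⟨∅, subset_rfl, by simpa [eq_comm] using hm⟩
  | insert a J haJ ih =>
    rw [prod_insert haJ] at hm
    obtain ⟨d, e, hd, he, rfl⟩ := exists_dvd_and_dvd_of_dvd_mul hm
    obtain ⟨K, hKJ, rfl⟩ := ih (fun i hi => hp i (mem_insert_of_mem hi)) he
    rcases (Nat.dvd_prime (hp a (mem_insert_self a J))).mp hd with rfl | rfl
    · exact ⟨K, hKJ.trans (subset_insert a J), (one_mul _).symm⟩
    · exact ⟨insert a K, insert_subset_insert a hKJ, prod_insert fun ha => haJ (hKJ ha)⟩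

section Pi

variable {ι : Type*} {M : ι → Type*}

theorem Set.Finite.exists_finset_injOn_restrict {s : Set (∀ i, M i)} (hs : s.Finite) :
    ∃ J : Finset ι, s.InjOn J.restrict := by
  have separating (q : {q : (∀ i, M i) × (∀ i, M i) // q ∈ s ×ˢ s ∧ q.1 ≠ q.2}) :
      ∃ i, q.1.1 i ≠ q.1.2 i :=
    ne_iff.mp q.2.2
  choose f hf using separating
  have : Finite {q : (∀ i, M i) × (∀ i, M i) // q ∈ s ×ˢ s ∧ q.1 ≠ q.2} :=
    ((hs.prod hs).subset fun _ hq => hq.1).to_subtype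
  refine ⟨(Set.finite_range f).toFinset, fun x hx y hy hxy => ?_⟩
  by_contra hne
  exact hf ⟨(x, y), ⟨hx, hy⟩, hne⟩ (congrFun hxy ⟨_, by simp⟩)

variable [∀ i, AddGroup (M i)]

theorem AddSubgroup.exists_card_dvd_prod_card (G : AddSubgroup (∀ i, M i)) [Finite G] :
    ∃ J : Finset ι, Nat.card G ∣ ∏ i ∈ J, Nat.card (M i) := by
  obtain ⟨J, hJ⟩ := (G : Set (∀ i, M i)).toFinite.exists_finset_injOn_restrict
  let restrict : G →+ ∀ i : J, M i :=
    (AddMonoidHom.pi fun i : J => Pi.evalAddMonoidHom M (i : ι)).comp G.subtype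
  have restrict_injective : Injective restrict := fun x y h => Subtype.ext (hJ x.2 y.2 h)
  refine ⟨J, ?_⟩
  rw [← J.prod_coe_sort, ← Nat.card_pi]
  exact AddSubgroup.card_dvd_of_injective restrict restrict_injective

theorem exists_addSubgroup_card_eq_prod_card (K : Finset ι) :
    ∃ G : AddSubgroup (∀ i, M i), Nat.card G = ∏ i ∈ K, Nat.card (M i) := by
  classical
  let extendByZero : (∀ i : K, M i) →+ ∀ i, M i :=
    AddMonoidHom.pi fun i =>
      if h : i ∈ K then Pi.evalAddMonoidHom (fun j : K => M j) ⟨i, h⟩ else 0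
  have extendByZero_injective : Injective extendByZero := fun y z h => funext fun ⟨i, hi⟩ => by
    simpa [extendByZero, hi] using congrFun h i
  refine ⟨extendByZero.range, ?_⟩
  rw [← K.prod_coe_sort, ← Nat.card_pi]
  exact Nat.card_congr (Equiv.ofInjective extendByZero extendByZero_injective).symm

end Pi

theorem finite_subgroup_orders_of_pi_zmod_general (I : Type) (p : I → ℕ)
    (hp : ∀ i, (p i).Prime) (m : ℕ) :
    (∃ G : AddSubgroup (∀ i, ZMod (p i)), Finite G ∧ Nat.card G = m) ↔
      ∃ J : Finset I, m ∣ ∏ i ∈ J, p i := by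
  constructor
  · rintro ⟨G, _, rfl⟩
    simpa only [Nat.card_zmod] using G.exists_card_dvd_prod_card
  · rintro ⟨J, hJ⟩
    obtain ⟨K, -, rfl⟩ := J.exists_subset_prod_eq_of_dvd_prod_primes (fun i _ => hp i) hJ
    obtain ⟨G, hG⟩ := exists_addSubgroup_card_eq_prod_card (M := fun i => ZMod (p i)) K
    simp only [Nat.card_zmod] at hG
    have prod_ne_zero : ∏ i ∈ K, p i ≠ 0 := Finset.prod_ne_zero_iff.mpr fun i _ => (hp i).ne_zero
    exact ⟨G, Nat.finite_of_card_ne_zero (hG ▸ prod_ne_zero), hG⟩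

/-- Let `I` be a countable index set and `(pᵢ)` a family of primes.
For a positive integer `m`, there is a finite subgroup of order `m` in the direct
product `∏ᵢ ℤ/pᵢℤ` if and only if `m` divides `∏_{i ∈ J} pᵢ` for some finite `J ⊆ I`. -/
theorem finite_subgroup_orders_of_pi_zmod (I : Type) [Countable I] (p : I → ℕ)
    (hp : ∀ i, (p i).Prime) (m : ℕ) (hm : 0 < m) :
    (∃ G : AddSubgroup (∀ i, ZMod (p i)), Finite G ∧ Nat.card G = m) ↔
      ∃ J : Finset I, m ∣ ∏ i ∈ J, p i :=
  finite_subgroup_orders_of_pi_zmod_general I p hp m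
end

section
/- With Γ = SL(3,ℚ) *_Σ SL(3,K) and Λ = Λ₁ * Λ₂ as in the context: for every g ∈ Γ ∖ Λ, the orbit of the coset gΛ ∈ Γ/Λ under left translation by Λ is infinite, i.e. the set { λgΛ : λ ∈ Λ } ⊆ Γ/Λ is infinite. -/
open Matrix

/-- The matrix `A = [[1,0,0],[1,q,0],[1,0,q⁻¹]]` as an element of `SL(3,F)`. -/
def AmatSL (F : Type) [Field F] [CharZero F] (q : ℚ) (hq : q ≠ 0) :
    Matrix.SpecialLinearGroup (Fin 3) F :=
  ⟨!![1, 0, 0; 1, (q : F), 0; 1, 0, (q : F)⁻¹], by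
    have hq' : (q : F) ≠ 0 := by exact_mod_cast hq
    simp [Matrix.det_fin_three, Matrix.vecHead, Matrix.vecTail]
    field_simp⟩

/-- The upper unitriangular matrix `[[1,a,b],[0,1,c],[0,0,1]]` with integer entries
as an element of `SL(3,F)`. -/
def unitriSL (F : Type) [Field F] (a b c : ℤ) : Matrix.SpecialLinearGroup (Fin 3) F :=
  ⟨!![1, (a : F), (b : F); 0, 1, (c : F); 0, 0, 1], by simp [Matrix.det_fin_three, Matrix.vecHead, Matrix.vecTail]⟩

lemma unitriSL_mul (F : Type) [Field F] (a b c a' b' c' : ℤ) :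
    unitriSL F a b c * unitriSL F a' b' c'
      = unitriSL F (a + a') (b + b' + a * c') (c + c') := by
  apply Subtype.ext
  show (unitriSL F a b c).val * (unitriSL F a' b' c').val = _
  ext i j
  fin_cases i <;> fin_cases j <;>
    simp [unitriSL, Matrix.mul_apply, Fin.sum_univ_three, Matrix.vecHead, Matrix.vecTail] <;> push_cast <;> ring

/-- The group `Λᵢ` of upper unitriangular matrices with integer entries,
as a subgroup of `SL(3,F)`. -/
def unitriSubgroup (F : Type) [Field F] : Subgroup (Matrix.SpecialLinearGroup (Fin 3) F) where
  carrier := {M | ∃ a b c : ℤ, M = unitriSL F a b c}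
  one_mem' := ⟨0, 0, 0, by
    apply Subtype.ext
    show (1 : Matrix (Fin 3) (Fin 3) F) = _
    ext i j
    fin_cases i <;> fin_cases j <;> simp [unitriSL, Matrix.vecHead, Matrix.vecTail]⟩
  mul_mem' := by
    rintro _ _ ⟨a, b, c, rfl⟩ ⟨a', b', c', rfl⟩
    exact ⟨a + a', b + b' + a * c', c + c', (unitriSL_mul F a b c a' b' c').symm ▸ rfl⟩
  inv_mem' := by
    rintro _ ⟨a, b, c, rfl⟩
    refine ⟨-a, a * c - b, -c, ?_⟩
    rw [inv_eq_iff_mul_eq_one, unitriSL_mul]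
    apply Subtype.ext
    show (unitriSL F _ _ _).val = (1 : Matrix (Fin 3) (Fin 3) F)
    ext i j
    fin_cases i <;> fin_cases j <;> simp [unitriSL, Matrix.vecHead, Matrix.vecTail] <;> push_cast <;> ring

/-- The pair of factors `Γ₁ = SL(3,ℚ)` (index `false`) and `Γ₂ = SL(3,K)` (index `true`). -/
def SLfam (K : Type) [Field K] : Bool → Type
  | false => Matrix.SpecialLinearGroup (Fin 3) ℚ
  | true => Matrix.SpecialLinearGroup (Fin 3) K

instance (K : Type) [Field K] : (i : Bool) → Group (SLfam K i)
  | false => inferInstanceAs (Group (Matrix.SpecialLinearGroup (Fin 3) ℚ))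
  | true => inferInstanceAs (Group (Matrix.SpecialLinearGroup (Fin 3) K))

/-- The element `A`, in each of the two factors. -/
def AmatFam (K : Type) [Field K] [CharZero K] (q : ℚ) (hq : q ≠ 0) :
    (i : Bool) → SLfam K i
  | false => AmatSL ℚ q hq
  | true => AmatSL K q hq

/-- The embeddings of `Σ = ℤ` into the two factors, sending the generator to `A`. -/
def sigmaMaps (K : Type) [Field K] [CharZero K] (q : ℚ) (hq : q ≠ 0) :
    (i : Bool) → Multiplicative ℤ →* SLfam K i :=
  fun i => zpowersHom (SLfam K i) (AmatFam K q hq i)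

/-- The amalgamated free product `Γ = SL(3,ℚ) *_Σ SL(3,K)`. -/
abbrev AmalGamma (K : Type) [Field K] [CharZero K] (q : ℚ) (hq : q ≠ 0) : Type :=
  Monoid.PushoutI (sigmaMaps K q hq)

/-- The canonical embeddings `Γᵢ → Γ`. -/
def amalInc (K : Type) [Field K] [CharZero K] (q : ℚ) (hq : q ≠ 0) (i : Bool) :
    SLfam K i →* AmalGamma K q hq :=
  Monoid.PushoutI.of (φ := sigmaMaps K q hq) i

/-- The subgroup of `Γᵢ` corresponding to `Λᵢ`, the integer unitriangular matrices. -/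
def unitriFam (K : Type) [Field K] : (i : Bool) → Subgroup (SLfam K i)
  | false => unitriSubgroup ℚ
  | true => unitriSubgroup K

/-- The subgroup `Λ = Λ₁ * Λ₂` of `Γ` generated by the images of `Λ₁` and `Λ₂`. -/
def amalLambda (K : Type) [Field K] [CharZero K] (q : ℚ) (hq : q ≠ 0) :
    Subgroup (AmalGamma K q hq) :=
  ((unitriFam K false).map (amalInc K q hq false)) ⊔ ((unitriFam K true).map (amalInc K q hq true))

/-- The subgroup `Σ = {Aᵏ} ≤ Γ` (the common image of the two copies of `Σ`). -/
def amalSigma (K : Type) [Field K] [CharZero K] (q : ℚ) (hq : q ≠ 0) :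
    Subgroup (AmalGamma K q hq) :=
  Subgroup.zpowers (amalInc K q hq false (AmatFam K q hq false))

/-!
If the `Λ`-orbit of `gΛ` is finite, pigeonhole in the infinite groups `Λ₁, Λ₂` gives, for each
factor `j`, some `1 ≠ ν ∈ Λⱼ` with `g⁻¹νg ∈ Λ`; this property of `g` is invariant under right
multiplication by `Λ`. It forces `g ∈ Λ`, by induction on the length of a reduced form
`g = x₁⋯xₙ·s` with `s ∈ Σ` (absorbed into `xₙ` when `n > 0`). Taking `j` different from the
factor of `x₁`, the word `xₙ⁻¹⋯x₁⁻¹·ν·x₁⋯xₙ` is reduced; since `Λᵢ ∩ Σ = 1`, the same element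
`g⁻¹νg ∈ Λ` is also a reduced word with letters in `Λ₁ ∪ Λ₂`. By the normal form theorem both
words end in the same factor, with last letters `xₙ` and `z ∈ Λᵢ` equal modulo `Σ`, so `gz⁻¹`
is shorter and lies in `Λ` by induction. For `n = 0` we have `g = Aᵏ` and `A⁻ᵏuAᵏ ∈ Λⱼ` for some
`1 ≠ u ∈ Λⱼ`, which a matrix computation rules out unless `k = 0`.
-/

section RationalMatrices

lemma unitriSL_zero (F : Type) [Field F] : unitriSL F 0 0 0 = 1 := by
  ext i j
  fin_cases i <;> fin_cases j <;> simp [unitriSL]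

lemma zpow_ne_one_of_ne_zero {α : Type*} [Field α] [LinearOrder α] [IsStrictOrderedRing α]
    {a : α} (ha1 : a ≠ 1) (ham1 : a ≠ -1) {k : ℤ} (hk : k ≠ 0) : a ^ k ≠ 1 := by
  rw [Ne, zpow_eq_one_iff_cases₀]
  rintro (h | h | ⟨h, -⟩) <;> contradiction

variable {q : ℚ}

/-- `A` fixes `v = (1, 1/(1-q), q/(q-1))` and scales `e₁, e₂` by `q, q⁻¹`; the first column is
`Aᵏ e₀ = v - qᵏ (v₁ e₁) - q⁻ᵏ (v₂ e₂)`. -/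
def AmatZpow (q : ℚ) (hq0 : q ≠ 0) (k : ℤ) : Matrix.SpecialLinearGroup (Fin 3) ℚ :=
  ⟨!![1, 0, 0; (q ^ k - 1) / (q - 1), q ^ k, 0; q * (q ^ (-k) - 1) / (1 - q), 0, q ^ (-k)], by
    simp [Matrix.det_fin_three, _root_.zpow_neg, mul_inv_cancel₀ (zpow_ne_zero k hq0)]⟩

lemma AmatZpow_mul_AmatSL (hq0 : q ≠ 0) (hq1 : q ≠ 1) (k : ℤ) :
    AmatZpow q hq0 k * AmatSL ℚ q hq0 = AmatZpow q hq0 (k + 1) := by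
  have : q - 1 ≠ 0 := sub_ne_zero.2 hq1
  have : 1 - q ≠ 0 := sub_ne_zero.2 hq1.symm
  ext i j
  rw [Matrix.SpecialLinearGroup.coe_mul]
  fin_cases i <;> fin_cases j <;>
    simp [AmatZpow, AmatSL, Matrix.mul_apply, Fin.sum_univ_three, zpow_add₀ hq0,
      _root_.zpow_neg] <;>
    field_simp <;> ring

lemma AmatSL_zpow (hq0 : q ≠ 0) (hq1 : q ≠ 1) (k : ℤ) :
    AmatSL ℚ q hq0 ^ k = AmatZpow q hq0 k := by
  induction k using Int.induction_on with
  | zero =>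
    ext i j
    fin_cases i <;> fin_cases j <;> simp [AmatZpow]
  | succ n ih => rw [_root_.zpow_add_one, ih, AmatZpow_mul_AmatSL hq0 hq1]
  | pred n ih =>
    rw [_root_.zpow_sub_one, ih, mul_inv_eq_iff_eq_mul, AmatZpow_mul_AmatSL hq0 hq1,
      sub_add_cancel]

lemma unitriSL_eq_one_of_AmatZpow_conj (hq0 : q ≠ 0) (hq1 : q ≠ 1) (hqm1 : q ≠ -1) {k : ℤ}
    (hk : k ≠ 0) {a b c a' b' c' : ℤ}
    (h : AmatZpow q hq0 k * unitriSL ℚ a' b' c' = unitriSL ℚ a b c * AmatZpow q hq0 k) :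
    unitriSL ℚ a b c = 1 := by
  have hQ : q ^ k ≠ 0 := zpow_ne_zero k hq0
  have hQ' : (q ^ k)⁻¹ - 1 ≠ 0 :=
    sub_ne_zero.2 fun h1 => zpow_ne_one_of_ne_zero hq1 hqm1 hk (inv_eq_one.1 h1)
  have h1q : 1 - q ≠ 0 := sub_ne_zero.2 hq1.symm
  have entry : ∀ i j, ((AmatZpow q hq0 k : Matrix (Fin 3) (Fin 3) ℚ) * unitriSL ℚ a' b' c') i j
      = ((unitriSL ℚ a b c : Matrix (Fin 3) (Fin 3) ℚ) * AmatZpow q hq0 k) i j := fun i j => by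
    rw [← Matrix.SpecialLinearGroup.coe_mul, h, Matrix.SpecialLinearGroup.coe_mul]
  -- the first three entries only need that the `(2, 0)` entry of `Aᵏ` is nonzero
  have hc := entry 1 0
  have ha' := entry 2 1
  have hb' := entry 2 2
  have ha := entry 0 1
  have hb := entry 0 2
  simp [AmatZpow, unitriSL, Matrix.mul_apply, Fin.sum_univ_three, hq0, hQ', h1q]
    at hc ha' hb' ha hb
  simp only [ha', hb', Int.cast_zero, zero_eq_mul, hQ, inv_eq_zero, or_false,
    Int.cast_eq_zero] at ha hb
  rw [ha, hb, hc, unitriSL_zero]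

end RationalMatrices

lemma Matrix.SpecialLinearGroup.map_injective {n : Type*} [Fintype n] [DecidableEq n]
    {R S : Type*} [CommRing R] [CommRing S] {f : R →+* S} (hf : Function.Injective f) :
    Function.Injective (Matrix.SpecialLinearGroup.map (n := n) f) := fun x y h => by
  ext i j
  exact hf (congrArg (fun M : Matrix.SpecialLinearGroup n S => M i j) h)

section CharZeroMatrices

variable (F : Type) [Field F] [CharZero F] {q : ℚ}

lemma map_castHom_AmatSL (hq0 : q ≠ 0) :
    Matrix.SpecialLinearGroup.map (Rat.castHom F) (AmatSL ℚ q hq0) = AmatSL F q hq0 := by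
  ext i j
  simp only [Matrix.SpecialLinearGroup.map_apply_coe, RingHom.mapMatrix_apply, Matrix.map_apply]
  fin_cases i <;> fin_cases j <;> simp [AmatSL]

lemma map_castHom_unitriSL (a b c : ℤ) :
    Matrix.SpecialLinearGroup.map (Rat.castHom F) (unitriSL ℚ a b c) = unitriSL F a b c := by
  ext i j
  simp only [Matrix.SpecialLinearGroup.map_apply_coe, RingHom.mapMatrix_apply, Matrix.map_apply]
  fin_cases i <;> fin_cases j <;> simp [unitriSL]

lemma AmatSL_zpow_eq_unitriSL (hq0 : q ≠ 0) (hq1 : q ≠ 1) (hqm1 : q ≠ -1) {k a b c : ℤ}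
    (h : AmatSL F q hq0 ^ k = unitriSL F a b c) : k = 0 := by
  rw [← map_castHom_AmatSL F hq0, ← map_zpow, ← map_castHom_unitriSL] at h
  have h11 := congrArg (fun M : Matrix.SpecialLinearGroup (Fin 3) ℚ => M 1 1)
    (Matrix.SpecialLinearGroup.map_injective (Rat.castHom F).injective h)
  simp only [AmatSL_zpow hq0 hq1, AmatZpow, unitriSL] at h11
  by_contra hk
  exact zpow_ne_one_of_ne_zero hq1 hqm1 hk (by simpa using h11)

lemma AmatSL_zpow_eq_one_iff (hq0 : q ≠ 0) (hq1 : q ≠ 1) (hqm1 : q ≠ -1) {k : ℤ} :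
    AmatSL F q hq0 ^ k = 1 ↔ k = 0 := by
  refine ⟨fun h => AmatSL_zpow_eq_unitriSL F hq0 hq1 hqm1 (a := 0) (b := 0) (c := 0) ?_, ?_⟩
  · rw [h, unitriSL_zero]
  · rintro rfl
    exact zpow_zero _

lemma unitriSubgroup_disjoint_zpowers (hq0 : q ≠ 0) (hq1 : q ≠ 1) (hqm1 : q ≠ -1) :
    Disjoint (unitriSubgroup F) (Subgroup.zpowers (AmatSL F q hq0)) := by
  rw [Subgroup.disjoint_def]
  rintro _ ⟨a, b, c, rfl⟩ hx
  obtain ⟨k, hk⟩ := Subgroup.mem_zpowers_iff.1 hx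
  rw [← hk, AmatSL_zpow_eq_unitriSL F hq0 hq1 hqm1 hk, zpow_zero]

lemma eq_zero_or_eq_one_of_AmatSL_zpow_conj_mem (hq0 : q ≠ 0) (hq1 : q ≠ 1) (hqm1 : q ≠ -1)
    {k : ℤ} {u : Matrix.SpecialLinearGroup (Fin 3) F} (hu : u ∈ unitriSubgroup F)
    (hconj : (AmatSL F q hq0 ^ k)⁻¹ * u * AmatSL F q hq0 ^ k ∈ unitriSubgroup F) :
    k = 0 ∨ u = 1 := by
  obtain ⟨a, b, c, rfl⟩ := hu
  obtain ⟨a', b', c', hconj⟩ := hconj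
  refine or_iff_not_imp_left.2 fun hk => ?_
  have h : AmatSL ℚ q hq0 ^ k * unitriSL ℚ a' b' c' = unitriSL ℚ a b c * AmatSL ℚ q hq0 ^ k := by
    apply Matrix.SpecialLinearGroup.map_injective (Rat.castHom F).injective
    simp only [map_mul, map_zpow, map_castHom_AmatSL, map_castHom_unitriSL, ← hconj]
    group
  rw [AmatSL_zpow hq0 hq1] at h
  rw [← map_castHom_unitriSL, unitriSL_eq_one_of_AmatZpow_conj hq0 hq1 hqm1 hk h, map_one]

lemma infinite_unitriSubgroup : Infinite (unitriSubgroup F) :=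
  Infinite.of_injective (fun n : ℤ => (⟨unitriSL F n 0 0, n, 0, 0, rfl⟩ : unitriSubgroup F))
    fun m n h => by
      simpa [unitriSL] using
        congrArg (fun M : unitriSubgroup F => (M : Matrix (Fin 3) (Fin 3) F) 0 1) h

end CharZeroMatrices

lemma List.exists_forall_mem_head?_fst_ne {ι : Type*} [Nontrivial ι] {β : ι → Type*}
    (l : List (Σ i, β i)) : ∃ j, ∀ p ∈ l.head?, p.1 ≠ j := by
  rcases l with _ | ⟨p, l⟩
  · exact ⟨Classical.arbitrary ι, by simp⟩
  · obtain ⟨j, hj⟩ := exists_ne p.1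
    exact ⟨j, by simpa using hj.symm⟩

namespace Monoid.PushoutI

open CoprodI

variable {ι : Type*} {G : ι → Type*} {H : Type*} [∀ i, Group (G i)] [Group H]
  {φ : ∀ i, H →* G i}

variable (φ) in
def listProd (l : List (Σ i, G i)) : PushoutI φ := (l.map fun p => of p.1 p.2).prod

@[simp]
lemma listProd_nil : listProd φ [] = 1 := rfl

@[simp]
lemma listProd_cons (p : Σ i, G i) (l : List (Σ i, G i)) :
    listProd φ (p :: l) = of p.1 p.2 * listProd φ l :=
  List.prod_cons

@[simp]
lemma listProd_append (l₁ l₂ : List (Σ i, G i)) :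
    listProd φ (l₁ ++ l₂) = listProd φ l₁ * listProd φ l₂ := by
  simp [listProd]

lemma listProd_singleton (p : Σ i, G i) : listProd φ [p] = of p.1 p.2 := by
  simp

lemma listProd_append_singleton_mul_base (l : List (Σ i, G i)) {i : ι} (x : G i) (s : H) :
    listProd φ (l ++ [⟨i, x⟩]) * base φ s = listProd φ (l ++ [⟨i, x * φ i s⟩]) := by
  simp [mul_assoc, ← of_apply_eq_base φ i]

lemma ofCoprodI_word_prod (w : Word G) : ofCoprodI w.prod = listProd φ w.toList := by
  simp [Word.prod, listProd, map_list_prod, Function.comp_def]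

def invList (l : List (Σ i, G i)) : List (Σ i, G i) :=
  (l.map fun p => ⟨p.1, p.2⁻¹⟩).reverse

@[simp]
lemma map_fst_invList (l : List (Σ i, G i)) :
    (invList l).map Sigma.fst = (l.map Sigma.fst).reverse := by
  simp [invList, List.map_reverse, Function.comp_def]

@[simp]
lemma listProd_invList (l : List (Σ i, G i)) :
    listProd φ (invList l) = (listProd φ l)⁻¹ := by
  induction l with
  | nil => rfl
  | cons p l ih => simp [invList, ← ih]

variable (φ) in
/-- The list version of `Monoid.PushoutI.Reduced`. -/
def IsReducedList (l : List (Σ i, G i)) : Prop :=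
  (l.map Sigma.fst).IsChain (· ≠ ·) ∧ ∀ p ∈ l, p.2 ∉ (φ p.1).range

namespace IsReducedList

variable {l l' : List (Σ i, G i)}

lemma of_map_fst_eq (hl : IsReducedList φ l) (hfst : l'.map Sigma.fst = l.map Sigma.fst)
    (hl' : ∀ p ∈ l', p.2 ∉ (φ p.1).range) : IsReducedList φ l' :=
  ⟨hfst ▸ hl.1, hl'⟩

lemma of_append_left {l₂ : List (Σ i, G i)} (hl : IsReducedList φ (l ++ l₂)) :
    IsReducedList φ l :=
  ⟨(List.isChain_append.1 (List.map_append ▸ hl.1)).1,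
    fun p hp => hl.2 p (List.mem_append_left _ hp)⟩

lemma replace_last {i : ι} {x y : G i} (hl : IsReducedList φ (l ++ [⟨i, x⟩]))
    (hy : y ∉ (φ i).range) : IsReducedList φ (l ++ [⟨i, y⟩]) := by
  refine hl.of_map_fst_eq (by simp) fun p hp => ?_
  rcases List.mem_append.1 hp with hp | hp
  · exact hl.2 p (List.mem_append_left _ hp)
  · rw [List.mem_singleton.1 hp]
    exact hy

lemma invList (hl : IsReducedList φ l) : IsReducedList φ (invList l) := by
  refine ⟨?_, ?_⟩
  · rw [map_fst_invList, List.isChain_reverse]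
    exact hl.1.imp fun _ _ h => h.symm
  · simp only [Monoid.PushoutI.invList, List.mem_reverse, List.mem_map]
    rintro _ ⟨p, hp, rfl⟩ hinv
    exact hl.2 p hp (by simpa using inv_mem hinv)

lemma invList_append_cons (hl : IsReducedList φ l) {j : ι} {u : G j} (hu : u ∉ (φ j).range)
    (hj : ∀ p ∈ l.head?, p.1 ≠ j) :
    IsReducedList φ (Monoid.PushoutI.invList l ++ ⟨j, u⟩ :: l) := by
  refine ⟨?_, ?_⟩
  · rw [List.map_append, List.isChain_append, List.map_cons]
    refine ⟨hl.invList.1, List.isChain_cons.2 ⟨?_, hl.1⟩, ?_⟩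
    · intro a ha
      rw [List.head?_map, Option.mem_map] at ha
      obtain ⟨p, hp, rfl⟩ := ha
      exact (hj p hp).symm
    · intro a ha b hb
      rw [map_fst_invList, List.getLast?_reverse, List.head?_map, Option.mem_map] at ha
      obtain ⟨p, hp, rfl⟩ := ha
      rw [List.head?_cons, Option.mem_some_iff] at hb
      exact hb ▸ hj p hp
  · intro p hp
    rcases List.mem_append.1 hp with hp | hp
    · exact hl.invList.2 p hp
    rcases List.mem_cons.1 hp with rfl | hp
    · exact hu
    · exact hl.2 p hp

lemma exists_normalWord (d : NormalWord.Transversal φ) (hl : IsReducedList φ l) :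
    ∃ w : NormalWord d, w.prod = listProd φ l ∧ w.toList.map Sigma.fst = l.map Sigma.fst := by
  let w : Word G :=
    ⟨l, fun p hp h1 => hl.2 p hp (h1 ▸ one_mem _), (List.isChain_map _).1 hl.1⟩
  obtain ⟨w', hprod, hfst⟩ := Reduced.exists_normalWord_prod_eq (w := w) d hl.2
  exact ⟨w', hprod.trans (ofCoprodI_word_prod w), hfst⟩

theorem map_fst_eq_of_listProd_eq (hφ : ∀ i, Function.Injective (φ i))
    (hl : IsReducedList φ l) (hl' : IsReducedList φ l') (h : listProd φ l = listProd φ l') :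
    l.map Sigma.fst = l'.map Sigma.fst := by
  obtain ⟨d⟩ := NormalWord.transversal_nonempty φ hφ
  obtain ⟨w, hw, hwl⟩ := hl.exists_normalWord d
  obtain ⟨w', hw', hwl'⟩ := hl'.exists_normalWord d
  rw [← hwl, ← hwl', NormalWord.prod_injective (hw.trans (h.trans hw'.symm))]

theorem exists_eq_append_of_listProd_eq (hφ : ∀ i, Function.Injective (φ i)) {i : ι} {x : G i}
    (hl : IsReducedList φ (l ++ [⟨i, x⟩])) (hl' : IsReducedList φ l')
    (h : listProd φ (l ++ [⟨i, x⟩]) = listProd φ l') :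
    ∃ l₀ y, l' = l₀ ++ [⟨i, y⟩] ∧ x * y⁻¹ ∈ (φ i).range := by
  have hfst := hl.map_fst_eq_of_listProd_eq hφ hl' h
  obtain rfl | ⟨l₀, ⟨j, y⟩, rfl⟩ := l'.eq_nil_or_concat'
  · simp at hfst
  simp only [List.map_append, List.map_cons, List.map_nil] at hfst
  obtain ⟨hfst, hij⟩ := List.append_inj' hfst rfl
  obtain rfl : i = j := by simpa using hij
  refine ⟨l₀, y, rfl, ?_⟩
  -- otherwise `l ++ [⟨i, x * y⁻¹⟩]` is reduced, has the product of `l₀`, and is one letter longer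
  by_contra hxy
  have hprod : listProd φ (l ++ [⟨i, x * y⁻¹⟩]) = listProd φ l₀ := by
    simp only [listProd_append, listProd_singleton] at h ⊢
    rw [map_mul, ← mul_assoc, h, map_inv, mul_inv_cancel_right]
  have := congrArg List.length
    ((hl.replace_last hxy).map_fst_eq_of_listProd_eq hφ hl'.of_append_left hprod)
  simp_all

end IsReducedList

lemma NormalWord.not_mem_range {d : NormalWord.Transversal φ} (w : NormalWord d) :
    ∀ p ∈ w.toList, p.2 ∉ (φ p.1).range := by
  rintro ⟨i, x⟩ hp (hx : x ∈ (φ i).range)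
  refine w.ne_one _ hp ?_
  have h1 := ((d.compl i).coe_equiv_snd_eq_one_iff_mem (d.one_mem i)).2 hx
  rwa [(d.compl i).equiv_snd_eq_self_of_mem_of_one_mem (one_mem _) (w.normalized i x hp)] at h1

theorem exists_isReducedList_eq_listProd_mul_base (hφ : ∀ i, Function.Injective (φ i))
    (g : PushoutI φ) : ∃ l s, IsReducedList φ l ∧ g = listProd φ l * base φ s := by
  classical
  obtain ⟨d⟩ := NormalWord.transversal_nonempty φ hφ
  let w : NormalWord d := g⁻¹ • NormalWord.empty
  have hg : g = w.prod⁻¹ := by simp [w]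
  refine ⟨invList w.toList, w.head⁻¹,
    IsReducedList.invList ⟨(List.isChain_map _).2 w.chain_ne, w.not_mem_range⟩, ?_⟩
  rw [hg, NormalWord.prod, _root_.mul_inv_rev, listProd_invList, ← ofCoprodI_word_prod, map_inv]

section Subgroups

variable (L : ∀ i, Subgroup (G i))

variable (φ) in
def factorsSup : Subgroup (PushoutI φ) := ⨆ i, (L i).map (of i)

lemma map_le_factorsSup (i : ι) : (L i).map (of i) ≤ factorsSup φ L :=
  le_iSup (fun i => (L i).map (of (φ := φ) i)) i

def IsLetterList (l : List (Σ i, G i)) : Prop :=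
  (l.map Sigma.fst).IsChain (· ≠ ·) ∧ ∀ p ∈ l, p.2 ∈ L p.1 ∧ p.2 ≠ 1

variable {L}

lemma IsLetterList.isReducedList (hL : ∀ i, Disjoint (L i) (φ i).range)
    {l : List (Σ i, G i)} (hl : IsLetterList L l) : IsReducedList φ l :=
  ⟨hl.1, fun p hp hr => (hl.2 p hp).2 (Subgroup.disjoint_def.1 (hL p.1) (hl.2 p hp).1 hr)⟩
lemma IsLetterList.exists_listProd_eq_mul_of {l : List (Σ i, G i)} (hl : IsLetterList L l)
    {j : ι} {y : G j} (hy : y ∈ L j) :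
    ∃ l', IsLetterList L l' ∧ listProd φ l' = listProd φ l * of j y := by
  classical
  by_cases hy1 : y = 1
  · exact ⟨l, hl, by simp [hy1]⟩
  obtain rfl | ⟨l₀, ⟨i, x⟩, rfl⟩ := l.eq_nil_or_concat'
  · exact ⟨[⟨j, y⟩], ⟨List.isChain_singleton _, by simp [hy, hy1]⟩, by simp⟩
  have hx := hl.2 ⟨i, x⟩ (by simp)
  have hl₀ : IsLetterList L l₀ :=
    ⟨(List.isChain_append.1 (List.map_append ▸ hl.1)).1,
      fun p hp => hl.2 p (List.mem_append_left _ hp)⟩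
  by_cases hij : i = j
  · subst hij
    by_cases hxy : x * y = 1
    · exact ⟨l₀, hl₀, by simp [mul_assoc, ← map_mul, hxy]⟩
    refine ⟨l₀ ++ [⟨i, x * y⟩], ⟨by simpa using hl.1, ?_⟩, by simp [mul_assoc]⟩
    intro p hp
    rcases List.mem_append.1 hp with hp | hp
    · exact hl₀.2 p hp
    · rw [List.mem_singleton.1 hp]
      exact ⟨mul_mem hx.1 hy, hxy⟩
  · refine ⟨l₀ ++ [⟨i, x⟩] ++ [⟨j, y⟩], ⟨?_, ?_⟩, by simp [mul_assoc]⟩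
    · rw [List.map_append, List.isChain_append]
      exact ⟨hl.1, List.isChain_singleton _, by simp [hij]⟩
    · intro p hp
      rcases List.mem_append.1 hp with hp | hp
      · exact hl.2 p hp
      · rw [List.mem_singleton.1 hp]
        exact ⟨hy, hy1⟩

theorem exists_isLetterList_of_mem_factorsSup {x : PushoutI φ} (hx : x ∈ factorsSup φ L) :
    ∃ l, IsLetterList L l ∧ listProd φ l = x := by
  rw [factorsSup, Subgroup.iSup_eq_closure] at hx
  induction hx using Subgroup.closure_induction_right with
  | one => exact ⟨[], ⟨List.isChain_nil, by simp⟩, rfl⟩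
  | mul_right x _ y hy ih =>
    obtain ⟨l, hl, rfl⟩ := ih
    obtain ⟨j, z, hz, rfl⟩ : ∃ j, ∃ z ∈ L j, of j z = y := by simpa using hy
    exact hl.exists_listProd_eq_mul_of hz
  | mul_inv_cancel x _ y hy ih =>
    obtain ⟨l, hl, rfl⟩ := ih
    obtain ⟨j, z, hz, rfl⟩ : ∃ j, ∃ z ∈ L j, of j z = y := by simpa using hy
    rw [← map_inv]
    exact hl.exists_listProd_eq_mul_of (inv_mem hz)

variable (hφ : ∀ i, Function.Injective (φ i)) (hL : ∀ i, Disjoint (L i) (φ i).range)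
include hφ hL

lemma conj_mem_of_base_conj_mem_factorsSup {s : H} {j : ι} {u : G j} (hu : u ∈ L j)
    (hu1 : u ≠ 1) (h : (base φ s)⁻¹ * of j u * base φ s ∈ factorsSup φ L) :
    (φ j s)⁻¹ * u * φ j s ∈ L j := by
  set u' := (φ j s)⁻¹ * u * φ j s
  have hprod : (base φ s)⁻¹ * of j u * base φ s = listProd φ [⟨j, u'⟩] := by
    simp [u', ← of_apply_eq_base φ j]
  have hred : IsReducedList φ [⟨j, u'⟩] := by
    refine ⟨List.isChain_singleton _, ?_⟩
    simp only [List.mem_singleton, forall_eq]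
    intro hu'
    refine hu1 (Subgroup.disjoint_def.1 (hL j) hu ?_)
    have hs : φ j s ∈ (φ j).range := ⟨s, rfl⟩
    simpa [u', mul_assoc] using mul_mem (mul_mem hs hu') (inv_mem hs)
  obtain ⟨m, hm, hmprod⟩ := exists_isLetterList_of_mem_factorsSup (hprod ▸ h)
  have hfst := hred.map_fst_eq_of_listProd_eq hφ (hm.isReducedList hL) hmprod.symm
  obtain ⟨z, rfl⟩ : ∃ z, m = [⟨j, z⟩] := by
    rcases m with _ | ⟨⟨j', z⟩, _ | _⟩ <;> simp at hfst
    subst hfst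
    exact ⟨z, rfl⟩
  have hz : z = u' := of_injective hφ j (by simpa using hmprod)
  exact hz ▸ (hm.2 _ (List.mem_singleton_self _)).1

/-- `g⁻¹ (of j u) g` is the product of the reduced list `g⁻¹ · u · g`, which ends like `g`;
comparing it with a letter list for the same element puts the last letter of `g` into `L i`
modulo the base. -/
lemma exists_mem_mul_inv_eq_of_conj_mem_factorsSup {w : List (Σ i, G i)} {i : ι} {x : G i}
    (hl : IsReducedList φ (w ++ [⟨i, x⟩])) {j : ι} {u : G j} (hu : u ∈ L j) (hu1 : u ≠ 1)
    (hj : ∀ p ∈ (w ++ [⟨i, x⟩] : List (Σ i, G i)).head?, p.1 ≠ j)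
    (h : (listProd φ (w ++ [⟨i, x⟩]))⁻¹ * of j u * listProd φ (w ++ [⟨i, x⟩]) ∈
      factorsSup φ L) :
    ∃ z ∈ L i, ∃ t : H, listProd φ (w ++ [⟨i, x⟩]) * (of i z)⁻¹ = listProd φ w * base φ t := by
  have hC : IsReducedList φ ((invList (w ++ [⟨i, x⟩]) ++ ⟨j, u⟩ :: w) ++ [⟨i, x⟩]) := by
    rw [List.append_assoc, List.cons_append]
    exact hl.invList_append_cons (fun hr => hu1 (Subgroup.disjoint_def.1 (hL j) hu hr)) hj
  obtain ⟨m, hm, hmprod⟩ := exists_isLetterList_of_mem_factorsSup h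
  rw [show (listProd φ (w ++ [⟨i, x⟩]))⁻¹ * of j u * listProd φ (w ++ [⟨i, x⟩]) =
      listProd φ ((invList (w ++ [⟨i, x⟩]) ++ ⟨j, u⟩ :: w) ++ [⟨i, x⟩]) by
    simp [mul_assoc]] at hmprod
  obtain ⟨m₀, z, rfl, t, ht⟩ :=
    hC.exists_eq_append_of_listProd_eq hφ (hm.isReducedList hL) hmprod.symm
  refine ⟨z, (hm.2 ⟨i, z⟩ (by simp)).1, t, ?_⟩
  simp [mul_assoc, ← map_inv, ← map_mul, ← ht, of_apply_eq_base]

theorem mem_factorsSup_of_forall_exists_conj_mem [Nontrivial ι]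
    (hconj : ∀ i (s : H), ∀ u ∈ L i, u ≠ 1 → (φ i s)⁻¹ * u * φ i s ∈ L i → s = 1)
    {g : PushoutI φ}
    (hg : ∀ j, ∃ ν ∈ (L j).map (of j), ν ≠ 1 ∧ g⁻¹ * ν * g ∈ factorsSup φ L) :
    g ∈ factorsSup φ L := by
  obtain ⟨l, s, hl, rfl⟩ := exists_isReducedList_eq_listProd_mul_base hφ g
  induction l using List.reverseRecOn generalizing s with
  | nil =>
    obtain ⟨j⟩ := (inferInstance : Nonempty ι)
    obtain ⟨_, ⟨u, hu, rfl⟩, hν1, hν⟩ := hg j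
    have hu1 : u ≠ 1 := fun hu1 => hν1 (hu1 ▸ map_one _)
    rw [listProd_nil, one_mul] at hν ⊢
    rw [hconj j s u hu hu1 (conj_mem_of_base_conj_mem_factorsSup hφ hL hu hu1 hν), map_one]
    exact one_mem _
  | append_singleton w p ih =>
    obtain ⟨i, x⟩ := p
    have hl' : IsReducedList φ (w ++ [⟨i, x * φ i s⟩]) :=
      hl.replace_last fun hr => hl.2 ⟨i, x⟩ (by simp) (by simpa using mul_mem hr (inv_mem ⟨s, rfl⟩))
    rw [listProd_append_singleton_mul_base] at hg ⊢
    obtain ⟨j, hj⟩ := List.exists_forall_mem_head?_fst_ne (w ++ [⟨i, x * φ i s⟩])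
    obtain ⟨_, ⟨u, hu, rfl⟩, hν1, hν⟩ := hg j
    obtain ⟨z, hz, t, ht⟩ := exists_mem_mul_inv_eq_of_conj_mem_factorsSup hφ hL hl' hu
      (fun hu1 => hν1 (hu1 ▸ map_one _)) hj hν
    have hzΛ : of i z ∈ factorsSup φ L := map_le_factorsSup L i ⟨z, hz, rfl⟩
    rw [mul_inv_eq_iff_eq_mul.1 ht]
    refine mul_mem (ih t hl'.of_append_left fun k => ?_) hzΛ
    obtain ⟨ν, hν, hν1, hνg⟩ := hg k
    refine ⟨ν, hν, hν1, ?_⟩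
    rw [← ht, show ∀ a b : PushoutI φ, (a * b⁻¹)⁻¹ * ν * (a * b⁻¹) = b * (a⁻¹ * ν * a) * b⁻¹ by
      intro a b; group]
    exact mul_mem (mul_mem hzΛ hνg) (inv_mem hzΛ)

end Subgroups

end Monoid.PushoutI
theorem Subgroup.exists_ne_one_conj_mem_of_finite_orbit {Γ : Type*} [Group Γ] {Λ M : Subgroup Γ}
    (hM : M ≤ Λ) [Infinite M] {g : Γ}
    (hfin : (Set.range fun l : Λ => (QuotientGroup.mk ((l : Γ) * g) : Γ ⧸ Λ)).Finite) :
    ∃ ν ∈ M, ν ≠ 1 ∧ g⁻¹ * ν * g ∈ Λ := by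
  have hmaps : Set.MapsTo (fun m : M => (QuotientGroup.mk ((m : Γ) * g) : Γ ⧸ Λ)) Set.univ
      (Set.range fun l : Λ => (QuotientGroup.mk ((l : Γ) * g) : Γ ⧸ Λ)) :=
    fun m _ => ⟨⟨m, hM m.2⟩, rfl⟩
  obtain ⟨m, -, m', -, hne, heq⟩ := Set.infinite_univ.exists_ne_map_eq_of_mapsTo hmaps hfin
  refine ⟨(m : Γ)⁻¹ * m', mul_mem (inv_mem m.2) m'.2, fun h => hne ?_, ?_⟩
  · exact Subtype.ext (inv_mul_eq_one.1 h)
  · simpa [mul_assoc] using QuotientGroup.eq.1 heq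

section Amalgam

open Monoid.PushoutI

variable (K : Type) [Field K] [CharZero K] {q : ℚ} (hq0 : q ≠ 0)

lemma amalLambda_eq_factorsSup :
    amalLambda K q hq0 = factorsSup (sigmaMaps K q hq0) (unitriFam K) := by
  rw [amalLambda, factorsSup, iSup_bool_eq, sup_comm]
  rfl

variable (hq1 : q ≠ 1) (hqm1 : q ≠ -1)
include hq1 hqm1

lemma sigmaMaps_injective (i : Bool) : Function.Injective (sigmaMaps K q hq0 i) := by
  rw [injective_iff_map_eq_one]
  intro s hs
  rw [← toAdd_eq_zero]
  simp only [sigmaMaps, zpowersHom_apply] at hs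
  cases i
  · exact (AmatSL_zpow_eq_one_iff ℚ hq0 hq1 hqm1).1 hs
  · exact (AmatSL_zpow_eq_one_iff K hq0 hq1 hqm1).1 hs

lemma unitriFam_disjoint_range (i : Bool) :
    Disjoint (unitriFam K i) (sigmaMaps K q hq0 i).range := by
  rw [sigmaMaps, Subgroup.range_zpowersHom]
  cases i
  · exact unitriSubgroup_disjoint_zpowers ℚ hq0 hq1 hqm1
  · exact unitriSubgroup_disjoint_zpowers K hq0 hq1 hqm1

lemma eq_one_of_sigmaMaps_conj_mem (i : Bool) (s : Multiplicative ℤ) (u : SLfam K i)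
    (hu : u ∈ unitriFam K i) (hu1 : u ≠ 1)
    (h : (sigmaMaps K q hq0 i s)⁻¹ * u * sigmaMaps K q hq0 i s ∈ unitriFam K i) : s = 1 := by
  rw [← toAdd_eq_zero]
  simp only [sigmaMaps, zpowersHom_apply] at h
  cases i
  · exact (eq_zero_or_eq_one_of_AmatSL_zpow_conj_mem ℚ hq0 hq1 hqm1 hu h).resolve_right hu1
  · exact (eq_zero_or_eq_one_of_AmatSL_zpow_conj_mem K hq0 hq1 hqm1 hu h).resolve_right hu1

end Amalgam

theorem lambda_orbits_on_quotient_infinite_general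
    (K : Type) [Field K] [CharZero K]
    (q : ℚ) (hq0 : q ≠ 0) (hq1 : q ≠ 1) (hqm1 : q ≠ -1)
    (g : AmalGamma K q hq0) (hg : g ∉ amalLambda K q hq0) :
    Set.Infinite (Set.range fun l : amalLambda K q hq0 =>
      (QuotientGroup.mk ((l : AmalGamma K q hq0) * g) :
        AmalGamma K q hq0 ⧸ amalLambda K q hq0)) := by
  intro hfin
  have hφ := sigmaMaps_injective K hq0 hq1 hqm1
  apply hg
  rw [amalLambda_eq_factorsSup] at hfin ⊢
  refine Monoid.PushoutI.mem_factorsSup_of_forall_exists_conj_mem hφ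
    (unitriFam_disjoint_range K hq0 hq1 hqm1) (eq_one_of_sigmaMaps_conj_mem K hq0 hq1 hqm1)
    fun j => ?_
  have : Infinite (unitriFam K j) := by cases j <;> exact infinite_unitriSubgroup _
  have : Infinite ((unitriFam K j).map (Monoid.PushoutI.of (φ := sigmaMaps K q hq0) j)) :=
    Infinite.of_injective _
      (Subgroup.equivMapOfInjective _ _ (Monoid.PushoutI.of_injective hφ j)).injective
  exact Subgroup.exists_ne_one_conj_mem_of_finite_orbit
    (Monoid.PushoutI.map_le_factorsSup _ j) hfin

/-- With `Γ = SL(3,ℚ) *_Σ SL(3,K)` and `Λ = Λ₁ * Λ₂` as above: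
for every `g ∈ Γ ∖ Λ`, the orbit of the coset `gΛ ∈ Γ/Λ` under left translation
by `Λ` is infinite. -/
theorem lambda_orbits_on_quotient_infinite
    (K : Type) [Field K] [CharZero K] [Countable K]
    (hKQ : ¬ Function.Surjective ((↑) : ℚ → K))
    (q : ℚ) (hq0 : q ≠ 0) (hq1 : q ≠ 1) (hqm1 : q ≠ -1)
    (g : AmalGamma K q hq0) (hg : g ∉ amalLambda K q hq0) :
    Set.Infinite (Set.range fun l : amalLambda K q hq0 =>
      (QuotientGroup.mk ((l : AmalGamma K q hq0) * g) :
        AmalGamma K q hq0 ⧸ amalLambda K q hq0)) :=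
  lambda_orbits_on_quotient_infinite_general K q hq0 hq1 hqm1 g hg
end

section
/- With Γ = SL(3,ℚ) *_Σ SL(3,K) and Λ = Λ₁ * Λ₂ as in the context: for every g ∈ Γ one has Σ ∩ gΛg⁻¹ = {e}. Equivalently, every orbit of Σ acting by left translation on Γ/Λ is infinite; equivalently, there is no finite index subgroup Σ₀ ≤ Σ and no g ∈ Γ with gΣ₀g⁻¹ ⊆ Λ. -/
open Matrix

/-!
Map `Γ` to `SL(3,K)` by the inclusion `SL(3,ℚ) ⊆ SL(3,K)` on the first factor and the identity on
the second. This sends `Λ` into the integer unitriangular matrices, which are unipotent, and `Aᵏ`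
to a matrix with eigenvalue `qᵏ` (eigenvector `e₂`). If `Aᵏ` lies in `gΛg⁻¹`, its image is
conjugate to a unipotent matrix, so all its eigenvalues are `1`; hence `qᵏ = 1`, and `|q| ≠ 1`
forces `k = 0`.
-/

section CommutingActions

variable {α : Type*}

theorem pow_smul_eq_pow_smul_of_smul_eq {M N : Type*} [Monoid M] [Monoid N] [MulAction M α]
    [MulAction N α] [SMulCommClass M N α] {g : M} {h : N} {v : α} (hv : g • v = h • v)
    (n : ℕ) : g ^ n • v = h ^ n • v := by
  induction n with
  | zero => simp
  | succ n ih => rw [pow_succ, mul_smul, hv, smul_comm, ih, ← mul_smul, ← pow_succ']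

theorem zpow_smul_eq_zpow_smul_of_smul_eq {G H : Type*} [Group G] [Group H] [MulAction G α]
    [MulAction H α] [SMulCommClass G H α] {g : G} {h : H} {v : α} (hv : g • v = h • v)
    (k : ℤ) : g ^ k • v = h ^ k • v := by
  have hinv : g⁻¹ • v = h⁻¹ • v := by
    rw [inv_smul_eq_iff, smul_comm, hv, inv_smul_smul]
  obtain ⟨n, rfl | rfl⟩ := Int.eq_nat_or_neg k
  · simpa using pow_smul_eq_pow_smul_of_smul_eq hv n
  · simpa using pow_smul_eq_pow_smul_of_smul_eq hinv n

end CommutingActions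

theorem Matrix.eq_one_of_isNilpotent_sub_one_of_mulVec_eq_smul {n K : Type*} [Fintype n]
    [DecidableEq n] [Field K] {A : Matrix n n K} (hA : IsNilpotent (A - 1)) {v : n → K}
    (hv : v ≠ 0) {μ : K} (h : A *ᵥ v = μ • v) : μ = 1 := by
  obtain ⟨m, hm⟩ := hA
  have h₁ : (A - 1) • v = (μ - 1) • v := by
    rw [smul_eq_mulVec, sub_mulVec, h, one_mulVec, sub_smul, one_smul]
  have hm' := pow_smul_eq_pow_smul_of_smul_eq h₁ m
  rw [hm, zero_smul, eq_comm, smul_eq_zero] at hm'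
  exact sub_eq_zero.mp (IsNilpotent.eq_zero ⟨m, hm'.resolve_right hv⟩)

theorem zpow_eq_one_iff_of_ne_one_of_ne_neg_one {F : Type*} [Field F] [LinearOrder F]
    [IsStrictOrderedRing F] {a : F} (h₁ : a ≠ 1) (h₂ : a ≠ -1) {k : ℤ} : a ^ k = 1 ↔ k = 0 := by
  refine ⟨fun h ↦ ?_, fun h ↦ h ▸ zpow_zero a⟩
  have habs : |a| ≠ 1 := by simp [abs_eq zero_le_one, h₁, h₂]
  rw [← zpow_eq_one_iff_right₀ (abs_nonneg a) habs, ← abs_zpow, h, abs_one]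

section SL3

variable {F : Type} [Field F]

theorem isNilpotent_sub_one_of_mem_unitriSubgroup {u : Matrix.SpecialLinearGroup (Fin 3) F}
    (hu : u ∈ unitriSubgroup F) : IsNilpotent ((u : Matrix (Fin 3) (Fin 3) F) - 1) := by
  obtain ⟨a, b, c, rfl⟩ := hu
  refine ⟨3, ?_⟩
  ext i j
  fin_cases i <;> fin_cases j <;>
    simp [unitriSL, pow_succ, Matrix.mul_apply, Fin.sum_univ_three, Matrix.one_apply]

theorem AmatSL_smul_eigenvector [CharZero F] (q : ℚ) (hq : q ≠ 0) :
    AmatSL F q hq • ![(0 : F), 1, 0] = (q : F) • ![0, 1, 0] := by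
  rw [Matrix.SpecialLinearGroup.smul_def, smul_eq_mulVec]
  ext j
  fin_cases j <;> simp [AmatSL, Matrix.mulVec, dotProduct, Fin.sum_univ_three]

theorem eq_zero_of_AmatSL_zpow_eq_conj [CharZero F] {q : ℚ} (hq : q ≠ 0) (hq1 : q ≠ 1)
    (hqm1 : q ≠ -1) {k : ℤ} {h u : Matrix.SpecialLinearGroup (Fin 3) F}
    (hu : u ∈ unitriSubgroup F) (hk : AmatSL F q hq ^ k = h * u * h⁻¹) : k = 0 := by
  have hq' : (q : F) ≠ 0 := Rat.cast_ne_zero.mpr hq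
  have hAk : AmatSL F q hq ^ k • ![0, 1, 0] = Units.mk0 (q : F) hq' ^ k • ![(0 : F), 1, 0] :=
    zpow_smul_eq_zpow_smul_of_smul_eq (AmatSL_smul_eigenvector q hq) k
  set w := h⁻¹ • ![(0 : F), 1, 0]
  have hw : w ≠ 0 := by
    rw [Ne, smul_eq_zero_iff_eq]
    intro h0
    simpa using congrFun h0 1
  have huw : (u : Matrix (Fin 3) (Fin 3) F) *ᵥ w = (q : F) ^ k • w := by
    calc (u : Matrix (Fin 3) (Fin 3) F) *ᵥ w = h⁻¹ • (AmatSL F q hq ^ k • ![0, 1, 0]) := by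
          rw [hk, mul_smul, mul_smul, inv_smul_smul]
          rfl
      _ = (q : F) ^ k • w := by
          rw [hAk, smul_comm, Units.smul_def, Units.val_zpow_eq_zpow_val, Units.val_mk0]
  have hqk : (q : F) ^ k = 1 :=
    Matrix.eq_one_of_isNilpotent_sub_one_of_mulVec_eq_smul
      (isNilpotent_sub_one_of_mem_unitriSubgroup hu) hw huw
  exact (zpow_eq_one_iff_of_ne_one_of_ne_neg_one hq1 hqm1).mp (by exact_mod_cast hqk)

end SL3

section Projection

variable (K : Type) [Field K] [CharZero K]

theorem map_AmatSL (q : ℚ) (hq : q ≠ 0) :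
    Matrix.SpecialLinearGroup.map (Rat.castHom K) (AmatSL ℚ q hq) = AmatSL K q hq := by
  refine Subtype.ext ?_
  rw [Matrix.SpecialLinearGroup.map_apply_coe]
  ext i j
  fin_cases i <;> fin_cases j <;> simp [AmatSL]

theorem map_unitriSL (a b c : ℤ) :
    Matrix.SpecialLinearGroup.map (Rat.castHom K) (unitriSL ℚ a b c) = unitriSL K a b c := by
  refine Subtype.ext ?_
  rw [Matrix.SpecialLinearGroup.map_apply_coe]
  ext i j
  fin_cases i <;> fin_cases j <;> simp [unitriSL]

def factorToSL : (i : Bool) → SLfam K i →* Matrix.SpecialLinearGroup (Fin 3) K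
  | false => Matrix.SpecialLinearGroup.map (Rat.castHom K)
  | true => MonoidHom.id _

theorem factorToSL_comp_sigmaMaps (q : ℚ) (hq : q ≠ 0) (i : Bool) :
    (factorToSL K i).comp (sigmaMaps K q hq i) = zpowersHom _ (AmatSL K q hq) := by
  refine MonoidHom.ext_mint ?_
  cases i
  · exact (congrArg (Matrix.SpecialLinearGroup.map (Rat.castHom K)) (zpow_one _)).trans
      ((map_AmatSL K q hq).trans (zpow_one _).symm)
  · rfl

def amalToSL (q : ℚ) (hq : q ≠ 0) : AmalGamma K q hq →* Matrix.SpecialLinearGroup (Fin 3) K :=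
  Monoid.PushoutI.lift (factorToSL K) (zpowersHom _ (AmatSL K q hq))
    (factorToSL_comp_sigmaMaps K q hq)

theorem amalToSL_amalInc (q : ℚ) (hq : q ≠ 0) (i : Bool) (x : SLfam K i) :
    amalToSL K q hq (amalInc K q hq i x) = factorToSL K i x :=
  Monoid.PushoutI.lift_of ..

theorem amalToSL_amalInc_AmatFam (q : ℚ) (hq : q ≠ 0) :
    amalToSL K q hq (amalInc K q hq false (AmatFam K q hq false)) = AmatSL K q hq :=
  (amalToSL_amalInc K q hq false _).trans (map_AmatSL K q hq)

theorem amalLambda_le_comap_amalToSL (q : ℚ) (hq : q ≠ 0) :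
    amalLambda K q hq ≤ (unitriSubgroup K).comap (amalToSL K q hq) := by
  refine sup_le ?_ ?_ <;> rintro _ ⟨x, ⟨a, b, c, rfl⟩, rfl⟩
  · exact ⟨a, b, c, (amalToSL_amalInc K q hq false _).trans (map_unitriSL K a b c)⟩
  · exact ⟨a, b, c, amalToSL_amalInc K q hq true _⟩

end Projection

theorem sigma_meets_conjugates_of_lambda_trivially_general
    (K : Type) [Field K] [CharZero K]
    (q : ℚ) (hq0 : q ≠ 0) (hq1 : q ≠ 1) (hqm1 : q ≠ -1)
    (g : AmalGamma K q hq0) :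
    amalSigma K q hq0 ⊓
      (amalLambda K q hq0).map (MulAut.conj g).toMonoidHom = ⊥ := by
  rw [eq_bot_iff]
  rintro _ ⟨hσ, y, hy, rfl⟩
  obtain ⟨k, hk⟩ := Subgroup.mem_zpowers_iff.mp hσ
  have hconj : AmatSL K q hq0 ^ k
      = amalToSL K q hq0 g * amalToSL K q hq0 y * (amalToSL K q hq0 g)⁻¹ := by
    rw [← amalToSL_amalInc_AmatFam, ← map_zpow, hk]
    simp
  rw [Subgroup.mem_bot, ← hk,
    eq_zero_of_AmatSL_zpow_eq_conj hq0 hq1 hqm1 (amalLambda_le_comap_amalToSL K q hq0 hy) hconj,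
    zpow_zero]

/-- With `Γ = SL(3,ℚ) *_Σ SL(3,K)` and `Λ = Λ₁ * Λ₂` as above:
for every `g ∈ Γ` one has `Σ ∩ gΛg⁻¹ = {e}`; equivalently every orbit of `Σ` acting by
left translation on `Γ/Λ` is infinite, and no finite index subgroup of `Σ` can be
conjugated into `Λ`. -/
theorem sigma_meets_conjugates_of_lambda_trivially
    (K : Type) [Field K] [CharZero K] [Countable K]
    (hKQ : ¬ Function.Surjective ((↑) : ℚ → K))
    (q : ℚ) (hq0 : q ≠ 0) (hq1 : q ≠ 1) (hqm1 : q ≠ -1)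
    (g : AmalGamma K q hq0) :
    amalSigma K q hq0 ⊓
      (amalLambda K q hq0).map (MulAut.conj g).toMonoidHom = ⊥ :=
  sigma_meets_conjugates_of_lambda_trivially_general K q hq0 hq1 hqm1 g
end

section
/- Let Γ = Γ₁ *_Σ Γ₂ be an amalgamated free product of groups along a common subgroup Σ, and let G ≤ Γ be a subgroup. Then sup{ |g| : g ∈ G } < ∞ if and only if there exist h ∈ Γ and i ∈ {1,2} such that hGh⁻¹ ⊆ Γᵢ. -/
/-!
`Γ` acts on its Bass–Serre tree, whose vertices are the right cosets `Γᵢ x` (with `g` sending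
`Γᵢ x` to `Γᵢ x g⁻¹`), two cosets being adjacent when they meet. We name the vertex `Γᵢ x` by the
letters of the normal form of `x` that follow its leading `Γᵢ`-letter; the path metric is then
an explicit common-suffix formula, which satisfies the four-point condition of a tree and is
invariant because it is realised by walks through meeting cosets.

A letter moves the base vertex `Γ₁` by at most `2`, so if the lengths in `G` are bounded then
the `G`-orbit of `Γ₁` is bounded. In a tree such a group fixes the midpoint of a longest orbit
segment, and the stabiliser of `Γᵢ u` is `u⁻¹ Γᵢ u`. Conversely, if `h G h⁻¹ ⊆ Γᵢ` then every
`g ∈ G` is `h⁻¹ γ h` with `γ ∈ Γᵢ`.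
-/

structure IsZeroHyperbolic {X : Type*} (δ : X → X → ℕ) : Prop where
  dist_self : ∀ x, δ x x = 0
  dist_comm : ∀ x y, δ x y = δ y x
  four_point : ∀ x y z w, δ x y + δ z w ≤ max (δ x z + δ y w) (δ x w + δ y z)

namespace IsZeroHyperbolic

variable {X : Type*} {δ : X → X → ℕ}

theorem dist_triangle (hδ : IsZeroHyperbolic δ) (x y z : X) : δ x z ≤ δ x y + δ y z := by
  have := hδ.four_point x z y y
  rw [hδ.dist_self, hδ.dist_comm z y] at this
  omega

theorem comp {Y : Type*} (hδ : IsZeroHyperbolic δ) (f : Y → X) :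
    IsZeroHyperbolic fun x y => δ (f x) (f y) :=
  ⟨fun _ => hδ.dist_self _, fun _ _ => hδ.dist_comm _ _,
    fun _ _ _ _ => hδ.four_point _ _ _ _⟩

theorem dist_le_of_midpoint (hδ : IsZeroHyperbolic δ) {x y m z : X} {q : ℕ}
    (hxy : δ x y = 2 * q) (hxm : δ x m ≤ q) (hmy : δ m y ≤ q)
    (hzx : δ z x ≤ 2 * q) (hzy : δ z y ≤ 2 * q) : δ z m ≤ q := by
  have := hδ.four_point z m x y
  rw [hδ.dist_comm m x] at this
  omega

theorem dist_eq_zero_of_midpoints (hδ : IsZeroHyperbolic δ) {x y m m' : X} {q : ℕ}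
    (hxy : δ x y = 2 * q) (hmx : δ m x ≤ q) (hmy : δ m y ≤ q)
    (hm'x : δ m' x ≤ q) (hm'y : δ m' y ≤ q) : δ m m' = 0 := by
  have := hδ.four_point m m' x y
  omega

variable {G : Type*} [Group G] [MulAction G X]

theorem dist_smul_list_prod_le (hδ : IsZeroHyperbolic δ)
    (hsmul : ∀ (g : G) x y, δ (g • x) (g • y) = δ x y) {S : Set G} {x₀ : X} {C : ℕ}
    (hS : ∀ s ∈ S, δ x₀ (s • x₀) ≤ C) :
    ∀ l : List G, (∀ s ∈ l, s ∈ S) → δ x₀ (l.prod • x₀) ≤ C * l.length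
  | [], _ => by simp [hδ.dist_self]
  | s :: l, hl => by
    have hs := hS s (hl s List.mem_cons_self)
    have ih := dist_smul_list_prod_le hδ hsmul hS l fun t ht => hl t (List.mem_cons_of_mem s ht)
    calc δ x₀ ((s :: l).prod • x₀)
        ≤ δ x₀ (s • x₀) + δ (s • x₀) (s • l.prod • x₀) := by
          rw [List.prod_cons, mul_smul]; exact hδ.dist_triangle _ _ _
      _ ≤ C * (s :: l).length := by rw [hsmul, List.length_cons, mul_add_one]; omega

/-- The fixed point is a midpoint of a longest orbit segment `[x₀, s • x₀]`. -/
theorem exists_forall_dist_smul_eq_zero (hδ : IsZeroHyperbolic δ)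
    (hsmul : ∀ (g : G) x y, δ (g • x) (g • y) = δ x y)
    (hmid : ∀ x y k, k ≤ δ x y → ∃ m, δ x m ≤ k ∧ δ m y ≤ δ x y - k)
    {H : Subgroup G} {x₀ : X} (heven : ∀ g ∈ H, Even (δ x₀ (g • x₀)))
    (hbdd : BddAbove ((fun g => δ x₀ (g • x₀)) '' (H : Set G))) :
    ∃ m, ∀ g ∈ H, δ m (g • m) = 0 := by
  obtain ⟨s, hsH, hs⟩ := Nat.sSup_mem (Set.image_nonempty.mpr ⟨1, H.one_mem⟩) hbdd
  have hmax : ∀ g ∈ H, δ x₀ (g • x₀) ≤ δ x₀ (s • x₀) := fun g hg =>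
    (le_csSup hbdd ⟨g, hg, rfl⟩).trans_eq hs.symm
  obtain ⟨q, hq⟩ := heven s hsH
  rw [← two_mul] at hq
  obtain ⟨m, hxm, hmy⟩ := hmid x₀ (s • x₀) q (by omega)
  have hclose : ∀ g ∈ H, δ (g • x₀) m ≤ q := fun g hg =>
    hδ.dist_le_of_midpoint hq hxm (by omega) (by rw [hδ.dist_comm, ← hq]; exact hmax g hg)
      (by
        rw [← hsmul g⁻¹, inv_smul_smul, smul_smul, ← hq]
        exact hmax _ (H.mul_mem (H.inv_mem hg) hsH))
  refine ⟨m, fun g hg => ?_⟩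
  refine hδ.dist_eq_zero_of_midpoints (x := g • x₀) (y := g • s • x₀) (q := q)
    (by rw [hsmul, hq]) (by rw [hδ.dist_comm]; exact hclose g hg)
    (by rw [hδ.dist_comm, smul_smul]; exact hclose _ (H.mul_mem hg hsH))
    (by rw [hsmul, hδ.dist_comm]; exact hxm) (by rw [hsmul]; omega)

end IsZeroHyperbolic

namespace LabelledTree

variable {Λ : Type*} [DecidableEq Λ] {τ : Λ → Bool}

variable (τ) in
/-- Twice the length of the common prefix of `L` and `M`, plus one if the paths they describe
from the base vertices `(a, [])` and `(b, [])` still share a vertex after it (same base vertex,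
or diverging letters of the same label). -/
def overlap : Bool → List Λ → Bool → List Λ → ℕ
  | a, [], b, [] => if a = b then 1 else 0
  | a, [], _, y :: _ => if τ y = a then 1 else 0
  | _, x :: _, b, [] => if τ x = b then 1 else 0
  | a, x :: L, b, y :: M => if x = y then 2 + overlap a L b M else if τ x = τ y then 1 else 0

theorem overlap_comm : ∀ (a : Bool) (L : List Λ) (b : Bool) (M : List Λ),
    overlap τ a L b M = overlap τ b M a L
  | _, [], _, [] => by simp [overlap, eq_comm]
  | _, [], _, _ :: _ => by simp [overlap]
  | _, _ :: _, _, [] => by simp [overlap]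
  | a, x :: L, b, y :: M => by
    by_cases h : x = y
    · subst h; simp [overlap, overlap_comm a L b M]
    · simp only [overlap, h, Ne.symm h, if_false, eq_comm]

theorem overlap_le_left : ∀ (a : Bool) (L : List Λ) (b : Bool) (M : List Λ),
    overlap τ a L b M ≤ 2 * L.length + 1
  | _, [], _, [] | _, [], _, _ :: _ => by simp only [overlap]; split <;> simp
  | _, _ :: _, _, [] => by simp only [overlap, List.length_cons]; split <;> omega
  | a, _ :: L, b, _ :: M => by
    have := overlap_le_left a L b M
    simp only [overlap, List.length_cons]
    split_ifs <;> omega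

theorem overlap_le_right (a : Bool) (L : List Λ) (b : Bool) (M : List Λ) :
    overlap τ a L b M ≤ 2 * M.length + 1 :=
  overlap_comm a L b M ▸ overlap_le_left b M a L

theorem min_overlap_le_overlap :
    ∀ (c : Bool) (K : List Λ) (a : Bool) (L : List Λ) (b : Bool) (M : List Λ),
      min (overlap τ a L c K) (overlap τ c K b M) ≤ overlap τ a L b M
  | c, [], a, [], b, [] | c, [], a, [], b, _ :: _ | c, [], a, _ :: _, b, []
  | c, _ :: _, a, [], b, [] | c, [], a, _ :: _, b, _ :: _ | c, _ :: _, a, [], b, _ :: _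
  | c, _ :: _, a, _ :: _, b, [] => by
    simp only [overlap]; split_ifs <;> simp_all [← Bool.eq_not, Nat.one_le_iff_ne_zero]
  | c, z :: K, a, x :: L, b, y :: M => by
    have := min_overlap_le_overlap c K a L b M
    have := overlap_le_left (τ := τ) a L c K
    have := overlap_le_right (τ := τ) c K b M
    simp only [overlap]
    split_ifs <;> simp_all [← Bool.eq_not]
    omega

theorem overlap_self (a b : Bool) : ∀ K : List Λ,
    overlap τ a K b K = 2 * K.length + if a = b then 1 else 0
  | [] => by simp [overlap]
  | x :: K => by rw [overlap, if_pos rfl, overlap_self a b K, List.length_cons]; ring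

theorem overlap_append_append (a b : Bool) (X Y : List Λ) : ∀ P : List Λ,
    overlap τ a (P ++ X) b (P ++ Y) = 2 * P.length + overlap τ a X b Y
  | [] => by simp
  | z :: P => by
    rw [List.cons_append, List.cons_append, overlap, if_pos rfl, overlap_append_append a b X Y P,
      List.length_cons]
    ring

theorem eq_of_length_add_length_lt_overlap : ∀ {a : Bool} {L : List Λ} {b : Bool} {M : List Λ},
    L.length + M.length < overlap τ a L b M → a = b ∧ L = M
  | a, [], b, [] => by simp only [overlap]; split <;> simp_all
  | a, [], b, y :: M | a, x :: L, b, [] => by simp only [overlap]; split <;> simp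
  | a, x :: L, b, y :: M => by
    simp only [overlap, List.length_cons]
    split_ifs with hxy
    · intro h
      obtain ⟨rfl, rfl⟩ :=
        eq_of_length_add_length_lt_overlap (a := a) (L := L) (b := b) (M := M) (by omega)
      exact ⟨rfl, hxy ▸ rfl⟩
    all_goals omega

variable (τ) in
/-- The path metric of the tree on `Bool × List Λ` with edges `(false, [])`–`(true, [])` and
`(a, x :: L)`–`(τ x, L)` for `τ x ≠ a`. `overlap` reads the lists from the base, hence the
reversals. -/
def treeDist (p q : Bool × List Λ) : ℕ :=
  p.2.length + q.2.length + 1 - overlap τ p.1 p.2.reverse q.1 q.2.reverse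

theorem treeDist_add_overlap (p q : Bool × List Λ) :
    treeDist τ p q + overlap τ p.1 p.2.reverse q.1 q.2.reverse = p.2.length + q.2.length + 1 := by
  have := overlap_le_left (τ := τ) p.1 p.2.reverse q.1 q.2.reverse
  have := overlap_le_right (τ := τ) p.1 p.2.reverse q.1 q.2.reverse
  simp only [List.length_reverse] at *
  unfold treeDist
  omega

theorem eq_of_treeDist_eq_zero {p q : Bool × List Λ} (h : treeDist τ p q = 0) : p = q := by
  have hsum := treeDist_add_overlap (τ := τ) p q
  obtain ⟨h₁, h₂⟩ := eq_of_length_add_length_lt_overlap (τ := τ)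
    (a := p.1) (L := p.2.reverse) (b := q.1) (M := q.2.reverse)
    (by simp only [List.length_reverse]; omega)
  exact Prod.ext h₁ (List.reverse_injective h₂)

theorem isZeroHyperbolic_treeDist : IsZeroHyperbolic (treeDist τ) where
  dist_self p := by
    unfold treeDist
    rw [overlap_self, if_pos rfl, List.length_reverse]
    omega
  dist_comm p q := by
    unfold treeDist
    rw [overlap_comm p.1]
    omega
  four_point := by
    rintro ⟨a, P⟩ ⟨b, Q⟩ ⟨c, R⟩ ⟨e, S⟩
    have u1 := min_overlap_le_overlap (τ := τ) c R.reverse a P.reverse b Q.reverse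
    have u2 := min_overlap_le_overlap (τ := τ) e S.reverse a P.reverse b Q.reverse
    have u3 := min_overlap_le_overlap (τ := τ) a P.reverse c R.reverse e S.reverse
    have u4 := min_overlap_le_overlap (τ := τ) b Q.reverse c R.reverse e S.reverse
    have := treeDist_add_overlap (τ := τ) (a, P) (b, Q)
    have := treeDist_add_overlap (τ := τ) (a, P) (c, R)
    have := treeDist_add_overlap (τ := τ) (a, P) (e, S)
    have := treeDist_add_overlap (τ := τ) (b, Q) (c, R)
    have := treeDist_add_overlap (τ := τ) (b, Q) (e, S)
    have := treeDist_add_overlap (τ := τ) (c, R) (e, S)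
    have := overlap_comm (τ := τ) a P.reverse c R.reverse
    have := overlap_comm (τ := τ) a P.reverse e S.reverse
    have := overlap_comm (τ := τ) b Q.reverse c R.reverse
    have := overlap_comm (τ := τ) b Q.reverse e S.reverse
    simp only at *
    rw [le_max_iff]
    rcases min_le_iff.mp u1 with h1 | h1 <;> rcases min_le_iff.mp u2 with h2 | h2 <;>
      rcases min_le_iff.mp u3 with h3 | h3 <;> rcases min_le_iff.mp u4 with h4 | h4 <;>
      omega

theorem treeDist_append_singleton (a b : Bool) (L M : List Λ) (z : Λ) :
    treeDist τ (a, L ++ [z]) (b, M ++ [z]) = treeDist τ (a, L) (b, M) := by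
  simp only [treeDist, List.reverse_append, List.reverse_singleton, List.singleton_append,
    List.length_append, List.length_singleton, overlap, if_true]
  omega

theorem treeDist_le_one_of_snd_eq (a b : Bool) (L : List Λ) : treeDist τ (a, L) (b, L) ≤ 1 := by
  simp only [treeDist, overlap_self, List.length_reverse]
  split <;> omega

theorem treeDist_cons_left {t : Λ} {b : Bool} (ht : τ t = b) (a : Bool) (M : List Λ) :
    treeDist τ (a, t :: M) (b, M) = 1 := by
  have h := overlap_append_append (τ := τ) a b [t] [] M.reverse
  simp only [List.append_nil, overlap, if_pos ht] at h
  simp only [treeDist, List.reverse_cons, h, List.length_reverse, List.length_cons]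
  omega

variable (τ) in
/-- The path from `(b, M)` towards the base edge ends at the vertex `(baseLabel τ b M, [])`. -/
def baseLabel (b : Bool) (M : List Λ) : Bool :=
  (M.getLast?.map τ).getD b

omit [DecidableEq Λ] in
theorem baseLabel_cons (a : Bool) (z : Λ) (M : List Λ) :
    baseLabel τ a (z :: M) = baseLabel τ (τ z) M := by
  cases M <;> simp [baseLabel, List.getLast?_cons]

omit [DecidableEq Λ] in
theorem baseLabel_eq_iff_even {M : List Λ} (hchain : M.IsChain fun s t => τ s ≠ τ t) :
    ∀ {a : Bool}, (∀ x ∈ M.head?, τ x ≠ a) →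
      (baseLabel τ a M = a ↔ Even M.length) := by
  induction M with
  | nil => simp [baseLabel]
  | cons x M ih =>
    intro a hx
    have hxa : τ x = !a := Bool.eq_not.mpr (hx x rfl)
    have ih' := ih hchain.tail fun y hy => ((List.isChain_cons.mp hchain).1 y hy).symm
    rw [baseLabel_cons, List.length_cons, Nat.even_add_one, ← ih', hxa]
    cases a <;> simp

theorem overlap_reverse_of_getLast?_ne {L M : List Λ}
    (h : ∀ z ∈ L.getLast?, M.getLast? ≠ some z) (a b : Bool) :
    overlap τ a L.reverse b M.reverse = if baseLabel τ a L = baseLabel τ b M then 1 else 0 := by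
  rcases L.eq_nil_or_concat with rfl | ⟨L, z, rfl⟩ <;>
    rcases M.eq_nil_or_concat with rfl | ⟨M, z', rfl⟩
  case inl.inl => rfl
  case inr.inr =>
    have hz : z ≠ z' := fun hz => h z (by simp) (by simp [hz])
    simp [overlap, baseLabel, hz]
  all_goals simp [overlap, baseLabel, eq_comm]

theorem treeDist_of_getLast?_ne {L M : List Λ} (h : ∀ z ∈ L.getLast?, M.getLast? ≠ some z)
    (a b : Bool) :
    treeDist τ (a, L) (b, M) =
      L.length + M.length + if baseLabel τ a L = baseLabel τ b M then 0 else 1 := by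
  have := treeDist_add_overlap (τ := τ) (a, L) (b, M)
  rw [overlap_reverse_of_getLast?_ne h] at this
  dsimp only at this
  split_ifs at this ⊢ <;> omega

theorem even_treeDist_nil_left {a : Bool} {M : List Λ}
    (hchain : M.IsChain fun s t => τ s ≠ τ t) (hhead : ∀ x ∈ M.head?, τ x ≠ a) :
    Even (treeDist τ (a, []) (a, M)) := by
  have hiff := baseLabel_eq_iff_even hchain hhead
  rw [treeDist_of_getLast?_ne (by simp), List.length_nil, zero_add]
  change Even (M.length + if a = baseLabel τ a M then 0 else 1)
  split_ifs with h
  · exact hiff.1 h.symm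
  · exact Nat.even_add_one.2 fun he => h (hiff.2 he).symm

end LabelledTree

namespace Monoid.PushoutI

variable {ι : Type*} [Nonempty ι] {G : ι → Type*} [∀ i, Group (G i)] {H : Type*} [Group H]
  {φ : ∀ i, H →* G i}

theorem exists_list_prod_eq (x : PushoutI φ) :
    ∃ l : List (PushoutI φ), (∀ y ∈ l, ∃ i, y ∈ (of (φ := φ) i).range) ∧
      l.prod = x := by
  refine Submonoid.exists_list_of_mem_closure ?_
  induction x using PushoutI.induction_on with
  | of i g => exact Submonoid.subset_closure ⟨i, g, rfl⟩
  | base h =>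
    exact Submonoid.subset_closure ⟨Classical.arbitrary ι, φ _ h, of_apply_eq_base φ _ h⟩
  | mul x y hx hy => exact mul_mem hx hy

theorem exists_forall_length_le_of_conj_mem_range (K : Subgroup (PushoutI φ)) {h : PushoutI φ}
    {i : ι} (hK : ∀ g ∈ K, h * g * h⁻¹ ∈ (of (φ := φ) i).range) :
    ∃ N : ℕ, ∀ g ∈ K, ∃ l : List (PushoutI φ), l.length ≤ N ∧
      (∀ x ∈ l, ∃ i, x ∈ (of (φ := φ) i).range) ∧ g = l.prod := by
  obtain ⟨l₁, hl₁, hl₁prod⟩ := exists_list_prod_eq h⁻¹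
  obtain ⟨l₂, hl₂, hl₂prod⟩ := exists_list_prod_eq h
  refine ⟨l₁.length + 1 + l₂.length, fun g hg => ?_⟩
  obtain ⟨γ, hγ⟩ := hK g hg
  refine ⟨l₁ ++ [of i γ] ++ l₂, ?_, ?_, ?_⟩
  · simp only [List.length_append, List.length_singleton]
    omega
  · simp only [List.mem_append, List.mem_singleton]
    rintro x ((hx | rfl) | hx)
    exacts [hl₁ x hx, ⟨i, γ, rfl⟩, hl₂ x hx]
  · rw [List.prod_append, List.prod_append, List.prod_singleton, hl₁prod, hl₂prod, hγ]
    group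

end Monoid.PushoutI

namespace BassSerre

open Monoid PushoutI NormalWord LabelledTree

variable {B : Type*} [Group B] {Γ : Bool → Type*} [∀ i, Group (Γ i)] {ψ : ∀ i, B →* Γ i}

variable (ψ) in
def lettersProd (l : List ((i : Bool) × Γ i)) : PushoutI ψ :=
  (l.map fun z => of z.1 z.2).prod

@[simp]
theorem lettersProd_nil : lettersProd ψ ([] : List ((i : Bool) × Γ i)) = 1 := rfl

theorem lettersProd_append (l l' : List ((i : Bool) × Γ i)) :
    lettersProd ψ (l ++ l') = lettersProd ψ l * lettersProd ψ l' := by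
  simp [lettersProd]

theorem ofCoprodI_prod (w : CoprodI.Word Γ) :
    ofCoprodI (φ := ψ) w.prod = lettersProd ψ w.toList := by
  rw [CoprodI.Word.prod, lettersProd, map_list_prod, List.map_map]
  rfl

/-- Cosets meet exactly when they are equal or adjacent in the Bass–Serre tree. -/
def CosetsMeet (p q : Bool × PushoutI ψ) : Prop :=
  ∃ (u : Γ p.1) (v : Γ q.1), of p.1 u * p.2 = of q.1 v * q.2

theorem CosetsMeet.symm {p q : Bool × PushoutI ψ} (h : CosetsMeet p q) : CosetsMeet q p :=
  let ⟨u, v, huv⟩ := h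
  ⟨v, u, huv.symm⟩

abbrev cosetAction : MulAction (PushoutI ψ) (Bool × PushoutI ψ) where
  smul g p := (p.1, p.2 * g⁻¹)
  one_smul p := by simp [HSMul.hSMul]
  mul_smul g h p := by simp [HSMul.hSMul, mul_assoc]

attribute [local instance] cosetAction

theorem smul_def (g : PushoutI ψ) (p : Bool × PushoutI ψ) : g • p = (p.1, p.2 * g⁻¹) := rfl

theorem CosetsMeet.smul {p q : Bool × PushoutI ψ} (h : CosetsMeet p q) (g : PushoutI ψ) :
    CosetsMeet (g • p) (g • q) :=
  let ⟨u, v, huv⟩ := h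
  ⟨u, v, by simp only [smul_def, ← mul_assoc]; rw [huv]⟩

variable (d : Transversal ψ)

structure IsCosetTail (a : Bool) (L : List ((i : Bool) × Γ i)) : Prop where
  ne_one : ∀ z ∈ L, z.2 ≠ 1
  isChain : L.IsChain fun s t => s.1 ≠ t.1
  mem_set : ∀ z ∈ L, z.2 ∈ d.set z.1
  head_ne : ∀ z ∈ L.head?, z.1 ≠ a

theorem IsCosetTail.of_cons {a : Bool} {z : (i : Bool) × Γ i} {L : List ((i : Bool) × Γ i)}
    (h : IsCosetTail d a (z :: L)) : IsCosetTail d z.1 L where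
  ne_one y hy := h.ne_one y (List.mem_cons_of_mem z hy)
  isChain := h.isChain.tail
  mem_set y hy := h.mem_set y (List.mem_cons_of_mem z hy)
  head_ne y hy := ((List.isChain_cons.mp h.isChain).1 y hy).symm

theorem IsCosetTail.of_append {a : Bool} {L M : List ((i : Bool) × Γ i)}
    (h : IsCosetTail d a (L ++ M)) : IsCosetTail d a L where
  ne_one y hy := h.ne_one y (List.mem_append_left M hy)
  isChain := h.isChain.prefix (List.prefix_append L M)
  mem_set y hy := h.mem_set y (List.mem_append_left M hy)
  head_ne y hy := h.head_ne y (by rcases L with _ | ⟨y', L⟩ <;> simp_all)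

variable [∀ i, DecidableEq (Γ i)]

/-- The letters of the normal form of `x` that follow its leading `Γₐ`-letter; it determines
the coset `Γₐ x` (`vertex_eq_iff`). -/
noncomputable def cosetTail (a : Bool) (x : PushoutI ψ) : List ((i : Bool) × Γ i) :=
  (equivPair a (NormalWord.equiv (d := d) x)).tail.toList

theorem cosetTail_of_mul (a : Bool) (γ : Γ a) (x : PushoutI ψ) :
    cosetTail d a (of a γ * x) = cosetTail d a x := by
  have : NormalWord.equiv (d := d) (of a γ * x) = of a γ • NormalWord.equiv x :=
    mul_smul (of (φ := ψ) a γ) x (NormalWord.empty (d := d))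
  rw [cosetTail, this, summand_smul_def, Equiv.apply_symm_apply]
  rfl

theorem exists_eq_of_mul_lettersProd_cosetTail (a : Bool) (x : PushoutI ψ) :
    ∃ γ : Γ a, x = of a γ * lettersProd ψ (cosetTail d a x) := by
  set p := equivPair a (NormalWord.equiv (d := d) x)
  have hx : NormalWord.equiv (d := d) x =
      of (φ := ψ) a p.head • (equivPair a).symm { p with head := 1 } := by
    rw [summand_smul_def, Equiv.apply_symm_apply, mul_one, Equiv.symm_apply_apply]
  refine ⟨p.head, ?_⟩
  conv_lhs => rw [← (NormalWord.equiv (d := d)).symm_apply_apply x, hx]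
  show NormalWord.prod _ = _
  rw [prod_smul]
  congr 1
  show (rcons a { p with head := 1 }).prod = _
  simp only [NormalWord.prod, NormalWord.rcons, CoprodI.Word.equivPair_symm,
    (d.compl a).equiv_one (Subgroup.one_mem _) (d.one_mem a)]
  rw [show (⟨1, _⟩ : (ψ a).range) = 1 from rfl, map_one, map_one, one_mul, CoprodI.Word.rcons,
    dif_pos rfl, ofCoprodI_prod]
  rfl

theorem isCosetTail_cosetTail (a : Bool) (x : PushoutI ψ) : IsCosetTail d a (cosetTail d a x) :=
  let p := equivPair a (NormalWord.equiv (d := d) x)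
  ⟨p.tail.ne_one, p.tail.chain_ne, fun z hz => p.normalized z.1 z.2 hz,
    fun z hz => (CoprodI.Word.fstIdx_ne_iff.mp p.fstIdx_ne z hz).symm⟩

theorem cosetTail_lettersProd {a : Bool} {L : List ((i : Bool) × Γ i)} (hL : IsCosetTail d a L) :
    cosetTail d a (lettersProd ψ L) = L := by
  let w : CoprodI.Word Γ := ⟨L, hL.ne_one, hL.isChain⟩
  let W : NormalWord d := ⟨w, 1, fun i g hg => hL.mem_set ⟨i, g⟩ hg⟩
  have hW : NormalWord.equiv (d := d) (lettersProd ψ L) = W := by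
    have : lettersProd ψ L = W.prod := by
      rw [NormalWord.prod, map_one, one_mul, ofCoprodI_prod]
    rw [this]
    exact prod_smul_empty W
  have hfst : w.fstIdx ≠ some a :=
    CoprodI.Word.fstIdx_ne_iff.mpr fun z hz => (hL.head_ne z hz).symm
  rw [cosetTail, hW]
  show (CoprodI.Word.equivPair a (CoprodI.of (ψ a 1) • w)).tail.toList = L
  rw [map_one, map_one, one_smul, CoprodI.Word.equivPair_eq_of_fstIdx_ne hfst]

theorem cosetTail_mul_inv_of_eq_append {a : Bool} {x : PushoutI ψ} {L : List ((i : Bool) × Γ i)}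
    {z : (i : Bool) × Γ i} (h : cosetTail d a x = L ++ [z]) :
    cosetTail d a (x * (of z.1 z.2)⁻¹) = L := by
  obtain ⟨γ, hγ⟩ := exists_eq_of_mul_lettersProd_cosetTail d a x
  have hsingle : lettersProd ψ [z] = of z.1 z.2 := by simp [lettersProd]
  rw [hγ, h, lettersProd_append, hsingle, mul_assoc, mul_inv_cancel_right, cosetTail_of_mul,
    cosetTail_lettersProd d (h ▸ isCosetTail_cosetTail d a x).of_append]

/-- `(i, x)` represents the vertex `Γᵢ x` of the Bass–Serre tree. -/
noncomputable def vertex (p : Bool × PushoutI ψ) : Bool × List ((i : Bool) × Γ i) :=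
  (p.1, cosetTail d p.1 p.2)

theorem vertex_eq_iff {p q : Bool × PushoutI ψ} :
    vertex d p = vertex d q ↔ p.1 = q.1 ∧ ∃ γ : Γ p.1, p.2 = of p.1 γ * q.2 := by
  obtain ⟨a, x⟩ := p
  obtain ⟨b, y⟩ := q
  simp only [vertex, Prod.mk.injEq]
  constructor
  · rintro ⟨rfl, h⟩
    obtain ⟨γ, hγ⟩ := exists_eq_of_mul_lettersProd_cosetTail d a x
    obtain ⟨δ, hδ⟩ := exists_eq_of_mul_lettersProd_cosetTail d a y
    refine ⟨rfl, γ * δ⁻¹, ?_⟩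
    rw [hγ, hδ, h, map_mul, map_inv]
    group
  · rintro ⟨rfl, γ, hx⟩
    rw [hx, cosetTail_of_mul]
    exact ⟨rfl, rfl⟩

theorem vertex_smul_eq_smul_iff {p q : Bool × PushoutI ψ} (g : PushoutI ψ) :
    vertex d (g • p) = vertex d (g • q) ↔ vertex d p = vertex d q := by
  simp only [vertex_eq_iff, smul_def, mul_left_inj, ← mul_assoc]

theorem CosetsMeet.of_vertex_eq_left {p p' q : Bool × PushoutI ψ} (hp : vertex d p' = vertex d p)
    (h : CosetsMeet p q) : CosetsMeet p' q := by
  obtain ⟨a, x⟩ := p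
  obtain ⟨a', x'⟩ := p'
  obtain ⟨rfl, γ, hx⟩ := (vertex_eq_iff d).1 hp
  obtain ⟨u, v, huv⟩ := h
  refine ⟨u * γ⁻¹, v, ?_⟩
  simp only at hx huv ⊢
  rw [hx, map_mul, map_inv, mul_assoc, inv_mul_cancel_left, huv]

noncomputable def cosetDist (p q : Bool × PushoutI ψ) : ℕ :=
  treeDist Sigma.fst (vertex d p) (vertex d q)

theorem isZeroHyperbolic_cosetDist : IsZeroHyperbolic (cosetDist d) :=
  isZeroHyperbolic_treeDist.comp (vertex d)

theorem vertex_eq_of_cosetDist_eq_zero {p q : Bool × PushoutI ψ} (h : cosetDist d p q = 0) :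
    vertex d p = vertex d q :=
  eq_of_treeDist_eq_zero h

theorem cosetDist_eq_zero_of_vertex_eq {p q : Bool × PushoutI ψ} (h : vertex d p = vertex d q) :
    cosetDist d p q = 0 := by
  rw [cosetDist, h]
  exact isZeroHyperbolic_treeDist.dist_self _

theorem toList_equiv_eq_cosetTail_or (a : Bool) (x : PushoutI ψ) :
    (NormalWord.equiv (d := d) x).toList = cosetTail d a x ∨
      ∃ g : Γ a, (NormalWord.equiv (d := d) x).toList = ⟨a, g⟩ :: cosetTail d a x := by
  set p := equivPair a (NormalWord.equiv (d := d) x)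
  have hx : (NormalWord.equiv (d := d) x).toList =
      (CoprodI.Word.rcons
        ⟨(((d.compl a).equiv p.head).2 : Γ a), p.tail, p.fstIdx_ne⟩).toList := by
    rw [← (equivPair a).symm_apply_apply (NormalWord.equiv x)]
    rfl
  by_cases h1 : (((d.compl a).equiv p.head).2 : Γ a) = 1
  · exact Or.inl (by rw [hx, CoprodI.Word.rcons, dif_pos h1]; rfl)
  · exact Or.inr ⟨_, by rw [hx, CoprodI.Word.rcons, dif_neg h1]; rfl⟩

theorem cosetDist_le_one_of_snd_eq (a b : Bool) (x : PushoutI ψ) :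
    cosetDist d (a, x) (b, x) ≤ 1 := by
  by_cases hab : a = b
  · subst hab
    rw [(isZeroHyperbolic_cosetDist d).dist_self]
    exact zero_le_one
  unfold cosetDist vertex
  rcases toList_equiv_eq_cosetTail_or d a x with ha | ⟨g, ha⟩ <;>
    rcases toList_equiv_eq_cosetTail_or d b x with hb | ⟨g', hb⟩
  · rw [← ha, ← hb]
    exact treeDist_le_one_of_snd_eq a b _
  · rw [show cosetTail d a x = ⟨b, g'⟩ :: cosetTail d b x by rw [← ha, ← hb],
      treeDist_cons_left rfl]
  · rw [show cosetTail d b x = ⟨a, g⟩ :: cosetTail d a x by rw [← ha, ← hb],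
      isZeroHyperbolic_treeDist.dist_comm, treeDist_cons_left rfl]
  · exact absurd (congrArg (fun l => l.head?.map Sigma.fst) (ha.symm.trans hb))
      (by simpa using hab)

theorem cosetDist_le_one_of_cosetsMeet {p q : Bool × PushoutI ψ} (h : CosetsMeet p q) :
    cosetDist d p q ≤ 1 := by
  obtain ⟨u, v, huv⟩ := h
  have hp : vertex d p = vertex d (p.1, of p.1 u * p.2) :=
    (vertex_eq_iff d).2 ⟨rfl, u⁻¹, by simp⟩
  have hq : vertex d q = vertex d (q.1, of p.1 u * p.2) :=
    (vertex_eq_iff d).2 ⟨rfl, v⁻¹, by simp [huv]⟩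
  rw [cosetDist, hp, hq]
  exact cosetDist_le_one_of_snd_eq d p.1 q.1 _

inductive CosetWalk : ℕ → Bool × PushoutI ψ → Bool × PushoutI ψ → Prop
  | nil {p q} : vertex d p = vertex d q → CosetWalk 0 p q
  | cons {n p r q} : CosetsMeet p r → CosetWalk n r q → CosetWalk (n + 1) p q

namespace CosetWalk

variable {d}

theorem cosetDist_le {n : ℕ} {p q : Bool × PushoutI ψ} (w : CosetWalk d n p q) :
    cosetDist d p q ≤ n := by
  induction w with
  | nil h => exact (cosetDist_eq_zero_of_vertex_eq d h).le
  | @cons n p r q h _ ih =>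
    have := (isZeroHyperbolic_cosetDist d).dist_triangle p r q
    have := cosetDist_le_one_of_cosetsMeet d h
    omega

theorem of_vertex_eq_left {n : ℕ} {p p' q : Bool × PushoutI ψ} (hp : vertex d p' = vertex d p) :
    CosetWalk d n p q → CosetWalk d n p' q
  | nil h => nil (hp.trans h)
  | cons h w => cons (h.of_vertex_eq_left d hp) w

theorem append {m n : ℕ} {p r q : Bool × PushoutI ψ} (w : CosetWalk d m p r)
    (w' : CosetWalk d n r q) : CosetWalk d (m + n) p q := by
  induction w with
  | nil h => simpa using w'.of_vertex_eq_left h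
  | cons h _ ih => rw [Nat.add_right_comm]; exact cons h (ih w')

theorem single {p q : Bool × PushoutI ψ} (h : CosetsMeet p q) : CosetWalk d 1 p q :=
  cons h (nil rfl)

theorem symm {n : ℕ} {p q : Bool × PushoutI ψ} (w : CosetWalk d n p q) : CosetWalk d n q p := by
  induction w with
  | nil h => exact nil h.symm
  | cons h _ ih => exact ih.append (single h.symm)

theorem smul {n : ℕ} {p q : Bool × PushoutI ψ} (w : CosetWalk d n p q) (g : PushoutI ψ) :
    CosetWalk d n (g • p) (g • q) := by
  induction w with
  | nil h => exact nil ((vertex_smul_eq_smul_iff d g).2 h)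
  | cons h _ ih => exact cons (h.smul g) ih

theorem exists_split {n : ℕ} {p q : Bool × PushoutI ψ} (w : CosetWalk d n p q) :
    ∀ {k : ℕ}, k ≤ n → ∃ r, CosetWalk d k p r ∧ CosetWalk d (n - k) r q := by
  induction w with
  | @nil p q h =>
    rintro k hk
    obtain rfl := Nat.le_zero.1 hk
    exact ⟨p, nil rfl, nil h⟩
  | @cons n p r q h w ih =>
    rintro (_ | k) hk
    · exact ⟨p, nil rfl, cons h w⟩
    · obtain ⟨s, w₁, w₂⟩ := ih (Nat.le_of_succ_le_succ hk)
      exact ⟨s, cons h w₁, by simpa using w₂⟩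

end CosetWalk

theorem exists_cosetWalk_to_base : ∀ (L : List ((i : Bool) × Γ i)) (a : Bool) (x : PushoutI ψ),
    cosetTail d a x = L → ∃ y, CosetWalk d L.length (a, x) (baseLabel Sigma.fst a L, y) ∧
      cosetTail d (baseLabel Sigma.fst a L) y = []
  | [], a, x, hx => ⟨x, .nil rfl, hx⟩
  | z :: L, a, x, hx => by
    obtain ⟨γ, hγ⟩ := exists_eq_of_mul_lettersProd_cosetTail d a x
    have hmeet : CosetsMeet (a, x) (z.1, lettersProd ψ L) :=
      ⟨γ⁻¹, z.2, by rw [hγ, hx, map_inv, inv_mul_cancel_left]; rfl⟩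
    have hL := cosetTail_lettersProd d (hx ▸ isCosetTail_cosetTail d a x).of_cons
    obtain ⟨y, w, hy⟩ := exists_cosetWalk_to_base L z.1 _ hL
    rw [baseLabel_cons]
    exact ⟨y, .cons hmeet w, hy⟩

theorem cosetWalk_of_cosetTail_eq_nil {a b : Bool} {x y : PushoutI ψ} (hx : cosetTail d a x = [])
    (hy : cosetTail d b y = []) : CosetWalk d (if a = b then 0 else 1) (a, x) (b, y) := by
  split_ifs with hab
  · subst hab
    exact .nil (by simp [vertex, hx, hy])
  obtain ⟨γ, hγ⟩ := exists_eq_of_mul_lettersProd_cosetTail d a x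
  obtain ⟨δ, hδ⟩ := exists_eq_of_mul_lettersProd_cosetTail d b y
  rw [hx, lettersProd_nil, mul_one] at hγ
  rw [hy, lettersProd_nil, mul_one] at hδ
  exact .single ⟨γ⁻¹, δ⁻¹, by simp [hγ, hδ]⟩

theorem exists_cosetWalk_of_getLast?_ne {a b : Bool} {x y : PushoutI ψ}
    (h : ∀ z ∈ (cosetTail d a x).getLast?, (cosetTail d b y).getLast? ≠ some z) :
    CosetWalk d (cosetDist d (a, x) (b, y)) (a, x) (b, y) := by
  obtain ⟨x', wx, hx'⟩ := exists_cosetWalk_to_base d _ a x rfl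
  obtain ⟨y', wy, hy'⟩ := exists_cosetWalk_to_base d _ b y rfl
  have := (wx.append (cosetWalk_of_cosetTail_eq_nil d hx' hy')).append wy.symm
  rwa [cosetDist, vertex, vertex, treeDist_of_getLast?_ne h, Nat.add_right_comm]

theorem exists_cosetWalk (p q : Bool × PushoutI ψ) : CosetWalk d (cosetDist d p q) p q := by
  obtain ⟨a, x⟩ := p
  obtain ⟨b, y⟩ := q
  induction hn : (cosetTail d a x).length + (cosetTail d b y).length
    using Nat.strong_induction_on generalizing x y with
  | _ n ih =>
  by_cases hlast : ∀ z ∈ (cosetTail d a x).getLast?, (cosetTail d b y).getLast? ≠ some z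
  · exact exists_cosetWalk_of_getLast?_ne d hlast
  push Not at hlast
  obtain ⟨z, hzx, hzy⟩ := hlast
  obtain ⟨L, hL⟩ := List.getLast?_eq_some_iff.1 hzx
  obtain ⟨M, hM⟩ := List.getLast?_eq_some_iff.1 hzy
  -- both tails end in `z`: multiplying by `g⁻¹` strips it without changing the distance
  have hx := cosetTail_mul_inv_of_eq_append d hL
  have hy := cosetTail_mul_inv_of_eq_append d hM
  set g := of (φ := ψ) z.1 z.2
  have hdist : cosetDist d (a, x * g⁻¹) (b, y * g⁻¹) = cosetDist d (a, x) (b, y) := by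
    simp only [cosetDist, vertex, hx, hy, hL, hM, treeDist_append_singleton]
  have hlt : L.length + M.length < n := by
    rw [← hn, hL, hM, List.length_append, List.length_append, List.length_singleton]
    omega
  have w := ih _ hlt (x * g⁻¹) (y * g⁻¹) (by rw [hx, hy])
  rw [hdist] at w
  simpa [smul_def] using w.smul g⁻¹

theorem cosetDist_smul (g : PushoutI ψ) (p q : Bool × PushoutI ψ) :
    cosetDist d (g • p) (g • q) = cosetDist d p q :=
  le_antisymm (((exists_cosetWalk d p q).smul g).cosetDist_le)
    (by simpa using ((exists_cosetWalk d (g • p) (g • q)).smul g⁻¹).cosetDist_le)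

theorem exists_cosetDist_le_of_le {p q : Bool × PushoutI ψ} {k : ℕ}
    (hk : k ≤ cosetDist d p q) :
    ∃ m, cosetDist d p m ≤ k ∧ cosetDist d m q ≤ cosetDist d p q - k :=
  let ⟨m, w₁, w₂⟩ := (exists_cosetWalk d p q).exists_split hk
  ⟨m, w₁.cosetDist_le, w₂.cosetDist_le⟩

theorem even_cosetDist_smul (a : Bool) (g : PushoutI ψ) :
    Even (cosetDist d (a, 1) (g • (a, (1 : PushoutI ψ)))) := by
  have h1 : cosetTail d a (1 : PushoutI ψ) = [] :=
    cosetTail_lettersProd d (L := []) ⟨by simp, List.isChain_nil, by simp, by simp⟩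
  have ht := isCosetTail_cosetTail d a (1 * g⁻¹)
  rw [cosetDist, vertex, vertex, smul_def, h1]
  exact even_treeDist_nil_left ht.isChain ht.head_ne

theorem cosetDist_smul_le_two_of_mem_range (a : Bool) {i : Bool} {g : PushoutI ψ}
    (hg : g ∈ (of (φ := ψ) i).range) :
    cosetDist d (a, 1) (g • (a, (1 : PushoutI ψ))) ≤ 2 := by
  obtain ⟨γ, rfl⟩ := hg
  have h₁ : CosetsMeet (a, (1 : PushoutI ψ)) (i, 1) := ⟨1, 1, by simp⟩
  have h₂ : CosetsMeet ((i, 1) : Bool × PushoutI ψ) (of i γ • (a, (1 : PushoutI ψ))) :=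
    ⟨γ⁻¹, 1, by rw [smul_def]; simp⟩
  exact (CosetWalk.cons h₁ (.single h₂)).cosetDist_le

theorem mul_mul_inv_mem_range_of_cosetDist_smul_eq_zero {c : Bool} {u g : PushoutI ψ}
    (h : cosetDist d (c, u) (g • (c, u)) = 0) : u * g * u⁻¹ ∈ (of (φ := ψ) c).range := by
  obtain ⟨-, γ, hγ⟩ := (vertex_eq_iff d).1 (vertex_eq_of_cosetDist_eq_zero d h)
  refine ⟨γ, ?_⟩
  simp only [smul_def] at hγ
  rw [eq_mul_inv_iff_mul_eq]
  nth_rewrite 2 [hγ]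
  group

omit [∀ i, DecidableEq (Γ i)] in
theorem exists_conj_mem_range_of_forall_length_le (hψ : ∀ i, Function.Injective (ψ i))
    (G : Subgroup (PushoutI ψ)) (N : ℕ)
    (hN : ∀ g ∈ G, ∃ l : List (PushoutI ψ), l.length ≤ N ∧
      (∀ x ∈ l, ∃ i : Bool, x ∈ (of (φ := ψ) i).range) ∧ g = l.prod) :
    ∃ (h : PushoutI ψ) (i : Bool), ∀ g ∈ G, h * g * h⁻¹ ∈ (of (φ := ψ) i).range := by
  classical
  obtain ⟨d⟩ := transversal_nonempty ψ hψ
  have hbdd : BddAbove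
      ((fun g => cosetDist d (true, 1) (g • (true, (1 : PushoutI ψ)))) ''
        (G : Set (PushoutI ψ))) := by
    refine ⟨2 * N, ?_⟩
    rintro _ ⟨g, hg, rfl⟩
    obtain ⟨l, hlN, hl, rfl⟩ := hN g hg
    calc _ ≤ 2 * l.length := (isZeroHyperbolic_cosetDist d).dist_smul_list_prod_le
            (cosetDist_smul d) (S := {x | ∃ i : Bool, x ∈ (of (φ := ψ) i).range})
            (fun _ ⟨_, hs⟩ => cosetDist_smul_le_two_of_mem_range d true hs) l hl
      _ ≤ 2 * N := by omega
  obtain ⟨⟨c, u⟩, hfix⟩ := (isZeroHyperbolic_cosetDist d).exists_forall_dist_smul_eq_zero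
    (cosetDist_smul d) (fun _ _ _ => exists_cosetDist_le_of_le d)
    (fun g _ => even_cosetDist_smul d true g) hbdd
  exact ⟨u, c, fun g hg => mul_mul_inv_mem_range_of_cosetDist_smul_eq_zero d (hfix g hg)⟩

end BassSerre

/-- Let `Γ = Γ₁ *_Σ Γ₂` be an amalgamated free product (realized as the
pushout of two injective maps `ψ i : Σ →* Γᵢ`, the two factors being indexed by `i : Bool`)
and let `G ≤ Γ` be a subgroup.  Then the reduced-expression lengths of the elements of `G`
are uniformly bounded (equivalently: there is an `N` such that every element of `G` is a
product of at most `N` elements of `Γ₁ ∪ Γ₂`) if and only if some conjugate `hGh⁻¹` of `G`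
is contained in one of the factors `Γᵢ`. -/
theorem bounded_length_iff_conjugate_into_factor
    (B : Type) [Group B] (Γfam : Bool → Type) [∀ i, Group (Γfam i)]
    (ψ : ∀ i, B →* Γfam i) (hinj : ∀ i, Function.Injective (ψ i))
    (G : Subgroup (Monoid.PushoutI ψ)) :
    (∃ N : ℕ, ∀ g ∈ G, ∃ l : List (Monoid.PushoutI ψ), l.length ≤ N ∧
        (∀ x ∈ l, ∃ i : Bool, x ∈ (Monoid.PushoutI.of (φ := ψ) i).range) ∧ g = l.prod) ↔
      ∃ (h : Monoid.PushoutI ψ) (i : Bool), ∀ g ∈ G,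
        h * g * h⁻¹ ∈ (Monoid.PushoutI.of (φ := ψ) i).range :=
  ⟨fun ⟨N, hN⟩ => BassSerre.exists_conj_mem_range_of_forall_length_le hinj G N hN,
    fun ⟨_, _, hG⟩ => Monoid.PushoutI.exists_forall_length_le_of_conj_mem_range G hG⟩
end

section
/- Let Γ = Γ₁ *_Σ Γ₂ be an amalgamated free product of groups along a common subgroup Σ, let i ∈ {1,2}, and let G ≤ Γᵢ be a subgroup such that G ⊀_{Γᵢ} Σ, i.e. there is no k ∈ Γᵢ for which G ∩ k⁻¹Σk has finite index in G. If g ∈ Γ satisfies gGg⁻¹ ⊆ Γᵢ, then g ∈ Γᵢ. -/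
/-!
Peel off the leading letter of `g⁻¹` lying in `Γᵢ`: `g⁻¹ = a u` with `a ∈ Γᵢ` and `u` a reduced
word not starting in `Γᵢ`. If `u` is nonempty, pick `x ∈ G` with `a⁻¹ x a ∉ Σ`, which exists
because `G` lies in no conjugate of `Σ`. Then `u⁻¹ (a⁻¹ x a) u` is a reduced word of length at
least three, and by the normal form theorem no reduced word of length at least two represents an
element of a factor; yet this word represents `g x g⁻¹ ∈ Γᵢ`.
-/

theorem Subgroup.exists_conj_notMem_of_relIndex_eq_zero {Γ : Type*} [Group Γ]
    {K G : Subgroup Γ} {k : Γ} (h : (K.map (MulAut.conj k⁻¹).toMonoidHom).relIndex G = 0) :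
    ∃ x ∈ G, k * x * k⁻¹ ∉ K := by
  by_contra! hle
  have hGK : G ≤ K.map (MulAut.conj k⁻¹).toMonoidHom := fun x hx =>
    Subgroup.mem_map_equiv.2 (by simpa using hle x hx)
  exact one_ne_zero ((Subgroup.relIndex_eq_one.2 hGK).symm.trans h)

namespace Monoid.PushoutI

open CoprodI

variable {ι : Type*} {G : ι → Type*} {H : Type*} [∀ i, Group (G i)] [Group H]
  {φ : ∀ i, H →* G i}

theorem reduced_cons_iff {i : ι} {a : G i} {w : Word G} (hw : w.fstIdx ≠ some i) (ha : a ≠ 1) :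
    Reduced φ (Word.cons a w hw ha) ↔ a ∉ (φ i).range ∧ Reduced φ w := by
  simp [Reduced, Word.cons]

theorem Reduced.eq_empty_of_mem_range_of_fstIdx_ne (hφ : ∀ i, Function.Injective (φ i))
    {i : ι} {w : Word G} (hw : Reduced φ w) (hi : w.fstIdx ≠ some i)
    (h : ofCoprodI w.prod ∈ (of (φ := φ) i).range) : w = .empty := by
  obtain ⟨y, hy⟩ := h
  by_cases hyφ : y ∈ (φ i).range
  · obtain ⟨b, rfl⟩ := hyφ
    exact hw.eq_empty_of_mem_range hφ ⟨b, by rw [← hy, of_apply_eq_base]⟩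
  · -- prepending `y⁻¹` gives a nonempty reduced word representing `1`
    have hy1 : y⁻¹ ≠ 1 := inv_ne_one.2 fun h => hyφ (h ▸ one_mem _)
    have hred : Reduced φ (Word.cons y⁻¹ w hi hy1) :=
      (reduced_cons_iff hi hy1).2 ⟨fun h => hyφ (by simpa using inv_mem h), hw⟩
    have := congrArg Word.toList
      (hred.eq_empty_of_mem_range hφ ⟨1, by simp [ofCoprodI_of, hy]⟩)
    simp [Word.empty] at this

theorem Reduced.length_le_one_of_mem_range (hφ : ∀ i, Function.Injective (φ i))
    {i : ι} {w : Word G} (hw : Reduced φ w)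
    (h : ofCoprodI w.prod ∈ (of (φ := φ) i).range) : w.toList.length ≤ 1 := by
  induction w using Word.consRecOn with
  | empty => simp [Word.empty]
  | cons j a w hw' ha _ =>
    obtain rfl | hji := eq_or_ne j i
    · have hmem : ofCoprodI w.prod ∈ (of (φ := φ) j).range := by
        rw [Word.prod_cons, map_mul, ofCoprodI_of] at h
        simpa using mul_mem (inv_mem (MonoidHom.mem_range.2 ⟨a, rfl⟩)) h
      simp [((reduced_cons_iff hw' ha).1 hw).2.eq_empty_of_mem_range_of_fstIdx_ne hφ hw' hmem,
        Word.empty]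
    · have := congrArg Word.toList
        (hw.eq_empty_of_mem_range_of_fstIdx_ne hφ (by simpa using hji) h)
      simp [Word.empty] at this

theorem Reduced.exists_ofCoprodI_prod_eq_of_mul {w : Word G} (hw : Reduced φ w) (i : ι) :
    ∃ (a : G i) (u : Word G), Reduced φ u ∧ u.fstIdx ≠ some i ∧
      ofCoprodI (φ := φ) w.prod = of i a * ofCoprodI u.prod := by
  induction w using Word.consRecOn with
  | empty => exact ⟨1, .empty, hw, by simp [Word.fstIdx, Word.empty], by simp⟩
  | cons j a u hu ha _ =>
    obtain rfl | hji := eq_or_ne j i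
    · exact ⟨a, u, ((reduced_cons_iff hu ha).1 hw).2, hu, by simp [ofCoprodI_of]⟩
    · exact ⟨1, _, hw, by simpa using hji, by simp⟩

theorem NormalWord.reduced {d : NormalWord.Transversal φ} (w : NormalWord d) :
    Reduced φ w.toWord := by
  rintro ⟨j, a⟩ ha hrange
  have h₁ := (d.compl j).equiv_snd_eq_self_of_mem_of_one_mem (one_mem _) (w.normalized j a ha)
  have h₂ := (d.compl j).equiv_snd_eq_one_of_mem_of_one_mem (d.one_mem j) hrange
  exact w.ne_one _ ha (congrArg Subtype.val (h₁.symm.trans h₂))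

theorem exists_eq_of_mul_ofCoprodI (hφ : ∀ i, Function.Injective (φ i)) (i : ι)
    (g : PushoutI φ) :
    ∃ (a : G i) (u : Word G), Reduced φ u ∧ u.fstIdx ≠ some i ∧
      g = of i a * ofCoprodI u.prod := by
  classical
  obtain ⟨d⟩ := NormalWord.transversal_nonempty φ hφ
  set w := NormalWord.equiv (d := d) g
  have hg : base φ w.head * ofCoprodI w.toWord.prod = g := NormalWord.equiv.symm_apply_apply g
  obtain ⟨a, u, hu, hui, hwu⟩ := w.reduced.exists_ofCoprodI_prod_eq_of_mul i
  exact ⟨φ i w.head * a, u, hu, hui, by rw [← hg, hwu, map_mul, of_apply_eq_base, mul_assoc]⟩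

theorem reduced_toWord_singleton {i : ι} {a : G i} (ha : a ≠ 1) :
    Reduced φ (NeWord.singleton a ha).toWord ↔ a ∉ (φ i).range := by
  simp [Reduced, NeWord.toWord]

theorem reduced_toWord_append {i j k l : ι} {w₁ : NeWord G i j} {hne : j ≠ k}
    {w₂ : NeWord G k l} :
    Reduced φ (NeWord.append w₁ hne w₂).toWord ↔ Reduced φ w₁.toWord ∧ Reduced φ w₂.toWord := by
  simp [Reduced, NeWord.toWord, or_imp, forall_and]

theorem Reduced.neWord_inv {i j : ι} {w : NeWord G i j} (hw : Reduced φ w.toWord) :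
    Reduced φ w.inv.toWord := by
  induction w with
  | singleton a ha =>
    rw [reduced_toWord_singleton] at hw
    exact (reduced_toWord_singleton _).2 (by simpa using hw)
  | append w₁ hne w₂ ih₁ ih₂ =>
    rw [reduced_toWord_append] at hw
    exact reduced_toWord_append.2 ⟨ih₂ hw.2, ih₁ hw.1⟩

theorem inv_mul_of_mul_notMem_range (hφ : ∀ i, Function.Injective (φ i)) {i : ι}
    {u : Word G} (hu : Reduced φ u) (hne : u ≠ .empty) (hui : u.fstIdx ≠ some i)
    {y : G i} (hy : y ∉ (φ i).range) :
    (ofCoprodI u.prod)⁻¹ * of i y * ofCoprodI u.prod ∉ (of (φ := φ) i).range := by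
  obtain ⟨j, k, w, rfl⟩ := NeWord.of_word u hne
  have hji : j ≠ i := by
    rintro rfl
    exact hui (by simp [Word.fstIdx, NeWord.toWord])
  have hy1 : y ≠ 1 := fun h => hy (h ▸ one_mem _)
  let W := NeWord.append (NeWord.append w.inv hji (NeWord.singleton y hy1)) hji.symm w
  have hW : Reduced φ W.toWord := reduced_toWord_append.2
    ⟨reduced_toWord_append.2 ⟨hu.neWord_inv, (reduced_toWord_singleton hy1).2 hy⟩, hu⟩
  have hlen : 2 ≤ W.toWord.toList.length := by
    have := List.length_pos_iff.2 w.toList_ne_nil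
    simp only [W, NeWord.toWord, NeWord.toList, List.length_append, List.length_cons]
    omega
  have hprod : ofCoprodI W.toWord.prod =
      (ofCoprodI w.toWord.prod)⁻¹ * of (φ := φ) i y * ofCoprodI w.toWord.prod := by
    change ofCoprodI W.prod = _
    simp only [W, NeWord.append_prod, NeWord.inv_prod, NeWord.prod_singleton, map_mul, map_inv,
      ofCoprodI_of]
    rfl
  intro h
  have := hW.length_le_one_of_mem_range hφ (hprod ▸ h)
  omega

end Monoid.PushoutI

open Monoid.PushoutI in
/-- Let `Γ = Γ₁ *_Σ Γ₂` be an amalgamated free product (realized as the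
pushout of two injective maps `ψ i : Σ →* Γᵢ`, with the two factors `Γᵢ` indexed by
`i : Bool`).  Let `G ≤ Γᵢ` be a subgroup such that `G ⊀_{Γᵢ} Σ`, i.e. no finite index
subgroup of `G` can be conjugated into `Σ` inside `Γᵢ`.  If `g ∈ Γ` satisfies
`g G g⁻¹ ⊆ Γᵢ`, then `g ∈ Γᵢ`. -/
theorem mem_factor_of_conj_subgroup_mem_factor
    (B : Type) [Group B] (Γfam : Bool → Type) [∀ i, Group (Γfam i)]
    (ψ : ∀ i, B →* Γfam i) (hinj : ∀ i, Function.Injective (ψ i))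
    (i : Bool) (G : Subgroup (Γfam i))
    (hG : ¬ ∃ k : Γfam i,
      (((ψ i).range.map (MulAut.conj k⁻¹).toMonoidHom).relIndex G ≠ 0))
    (g : Monoid.PushoutI ψ)
    (hconj : ∀ x ∈ G, g * Monoid.PushoutI.of (φ := ψ) i x * g⁻¹ ∈
      (Monoid.PushoutI.of (φ := ψ) i).range) :
    g ∈ (Monoid.PushoutI.of (φ := ψ) i).range := by
  push Not at hG
  obtain ⟨a, u, hu, hui, hg⟩ := exists_eq_of_mul_ofCoprodI hinj i g⁻¹
  have hg' : g = (ofCoprodI u.prod)⁻¹ * of i a⁻¹ := by rw [← inv_inv g, hg]; simp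
  obtain rfl | hne := eq_or_ne u .empty
  · simp [hg']
  obtain ⟨x, hxG, hx⟩ := Subgroup.exists_conj_notMem_of_relIndex_eq_zero (hG a⁻¹)
  refine absurd ?_ (inv_mul_of_mul_notMem_range hinj hu hne hui hx)
  convert hconj x hxG using 1
  simp [hg', mul_assoc]
end

section
/- Let K be a field of characteristic zero and let Λ₂ ⊆ GL(3,K) denote the group of upper unitriangular 3×3 matrices with integer entries, {[[1,a,b],[0,1,c],[0,0,1]] : a,b,c ∈ ℤ}. If B ∈ GL(3,K) satisfies B⁻¹Λ₂B = Λ₂, then B is upper triangular. -/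
/-!
The element `Z = [[1,0,1],[0,1,0],[0,0,1]]` is central in `Λ₂`. Conjugation by `B` preserves `Λ₂`,
hence also its centralizer, so `B Z B⁻¹` is a central element of `Λ₂`, i.e. `[[1,0,b],[0,1,0],[0,0,1]]`
with `b ≠ 0` since `Z ≠ 1`. Writing `Z = 1 + E₀₂`, the relation `B Z = (1 + b E₀₂) B` becomes
`B E₀₂ = b E₀₂ B`, whose entries `(1,2)`, `(2,2)` and `(0,1)` say `B₁₀ = B₂₀ = b B₂₁ = 0`.
-/

/-- The upper unitriangular matrix `[[1,a,b],[0,1,c],[0,0,1]]` with integer entries,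
regarded as a matrix over a field `K` of characteristic zero. -/
def unitriMat (K : Type) [Field K] (a b c : ℤ) : Matrix (Fin 3) (Fin 3) K :=
  !![1, (a : K), (b : K); 0, 1, (c : K); 0, 0, 1]

theorem Units.conj_mem_centralizer {M : Type*} [Monoid M] (u : Mˣ) {S : Set M}
    (hS : ∀ m, (u : M) * m * ↑u⁻¹ ∈ S ↔ m ∈ S) {z : M} (hz : z ∈ S.centralizer) :
    (u : M) * z * ↑u⁻¹ ∈ S.centralizer := by
  intro s hs
  have hs' : ↑u⁻¹ * s * u ∈ S := (hS _).mp (by simpa [mul_assoc] using hs)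
  calc s * (u * z * ↑u⁻¹) = u * ((↑u⁻¹ * s * u) * z) * ↑u⁻¹ := by simp [mul_assoc]
    _ = u * (z * (↑u⁻¹ * s * u)) * ↑u⁻¹ := by rw [hz _ hs']
    _ = u * z * ↑u⁻¹ * s := by simp [mul_assoc]

section
variable {K : Type} [Field K]

variable (K) in
def unitriSet : Set (Matrix (Fin 3) (Fin 3) K) := {m | ∃ a b c : ℤ, m = unitriMat K a b c}

theorem unitriMat_mul (a b c a' b' c' : ℤ) :
    unitriMat K a b c * unitriMat K a' b' c' =
      unitriMat K (a + a') (b + b' + a * c') (c + c') := by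
  ext i j
  fin_cases i <;> fin_cases j <;> simp [unitriMat, Matrix.mul_apply, Fin.sum_univ_three] <;> ring

theorem unitriMat_apply_zero_two (a b c : ℤ) : unitriMat K a b c 0 2 = b := rfl

theorem unitriMat_zero_mem_centralizer (b : ℤ) :
    unitriMat K 0 b 0 ∈ (unitriSet K).centralizer := by
  rintro _ ⟨a', b', c', rfl⟩
  simp only [unitriMat_mul]
  congr 1 <;> ring

theorem unitriMat_eq_of_mem_centralizer {a b c : ℤ}
    (h : unitriMat K a b c ∈ (unitriSet K).centralizer) :
    unitriMat K a b c = unitriMat K 0 b 0 := by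
  have hc := congrArg (· 0 2) (h _ ⟨1, 0, 0, rfl⟩)
  have ha := congrArg (· 0 2) (h _ ⟨0, 0, 1, rfl⟩)
  simp only [unitriMat_mul, unitriMat_apply_zero_two] at hc ha
  push_cast at hc ha
  have hc0 : (c : K) = 0 := by linear_combination hc
  have ha0 : (a : K) = 0 := by linear_combination -ha
  simp [unitriMat, hc0, ha0]

theorem lower_eq_zero_of_mul_unitriMat (B : Matrix (Fin 3) (Fin 3) K) {b : ℤ} (hb : (b : K) ≠ 0)
    (h : B * unitriMat K 0 1 0 = unitriMat K 0 b 0 * B) :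
    B 1 0 = 0 ∧ B 2 0 = 0 ∧ B 2 1 = 0 := by
  have e12 := congrFun (congrFun h 1) 2
  have e22 := congrFun (congrFun h 2) 2
  have e01 := congrFun (congrFun h 0) 1
  simp [unitriMat, Matrix.mul_apply, Fin.sum_univ_three, hb] at e12 e22 e01
  exact ⟨e12, e22, e01⟩

end

theorem upperTriangular_of_normalizes_unitriangular_general (K : Type) [Field K]
    (B : Matrix (Fin 3) (Fin 3) K) (hB : IsUnit B.det)
    (hnorm : ∀ m : Matrix (Fin 3) (Fin 3) K,
      (∃ a b c : ℤ, B * m * B⁻¹ = unitriMat K a b c) ↔ ∃ a b c : ℤ, m = unitriMat K a b c) :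
    B 1 0 = 0 ∧ B 2 0 = 0 ∧ B 2 1 = 0 := by
  set u := B.nonsingInvUnit hB
  have hZ : B * unitriMat K 0 1 0 * B⁻¹ ∈ (unitriSet K).centralizer :=
    u.conj_mem_centralizer hnorm (unitriMat_zero_mem_centralizer 1)
  obtain ⟨a, b, c, hconj⟩ := (hnorm _).mpr ⟨0, 1, 0, rfl⟩
  rw [hconj] at hZ
  rw [unitriMat_eq_of_mem_centralizer hZ] at hconj
  have hmul : B * unitriMat K 0 1 0 = unitriMat K 0 b 0 * B := u.mul_inv_eq_iff_eq_mul.mp hconj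
  have hb : (b : K) ≠ 0 := by
    intro hb
    have hone : unitriMat K 0 b 0 = 1 := by simp [unitriMat, hb, Matrix.one_fin_three]
    rw [hone, one_mul] at hmul
    simpa [unitriMat] using congrArg (· 0 2) (u.mul_right_inj.mp (hmul.trans (mul_one B).symm))
  exact lower_eq_zero_of_mul_unitriMat B hb hmul

/-- If `B ∈ GL(3,K)` normalizes the group `Λ₂` of integer upper
unitriangular matrices, i.e. `B⁻¹ Λ₂ B = Λ₂`, then `B` is upper triangular. -/
theorem upperTriangular_of_normalizes_unitriangular (K : Type) [Field K] [CharZero K]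
    (B : Matrix (Fin 3) (Fin 3) K) (hB : IsUnit B.det)
    (hnorm : ∀ m : Matrix (Fin 3) (Fin 3) K,
      (∃ a b c : ℤ, B * m * B⁻¹ = unitriMat K a b c) ↔ ∃ a b c : ℤ, m = unitriMat K a b c) :
    B 1 0 = 0 ∧ B 2 0 = 0 ∧ B 2 1 = 0 :=
  upperTriangular_of_normalizes_unitriangular_general K B hB hnorm
end

section
/- Let K be a field of characteristic zero, q ∈ ℚ ∖ {0,1,−1}, A = [[1,0,0],[1,q,0],[1,0,q⁻¹]] ∈ GL(3,K), Σ = {Aᵏ : k ∈ ℤ}, and let Λ₂ ⊆ GL(3,K) denote the group of upper unitriangular 3×3 matrices with integer entries. If B ∈ GL(3,K) satisfies B⁻¹Λ₂B = Λ₂ and B⁻¹ΣB = Σ, then B is a scalar multiple of the identity matrix. -/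
/-- The matrix `A = [[1,0,0],[1,q,0],[1,0,q⁻¹]]` over `K`. -/
def Amat (K : Type) [Field K] (q : ℚ) : Matrix (Fin 3) (Fin 3) K :=
  !![1, 0, 0; 1, (q : K), 0; 1, 0, (q : K)⁻¹]

/-!
Conjugation by `B` maps the infinite cyclic group `⟨A⟩` onto itself, so it sends `A` to `A` or
to `A⁻¹`. If `B` commutes with `A`, whose eigenvalues `1, q, q⁻¹` are distinct, then the only
possibly nonzero off-diagonal entries of `B` lie in its first column, and they are tied to the
differences of the diagonal entries; since `B` also normalizes `Λ₂`, conjugating `1 + E₀₁` kills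
them. If instead `ABA = B`, the same computation with `1 + E₁₂` shows that the middle column of `B`
vanishes, contradicting invertibility.
-/

theorem eq_one_or_neg_one_of_conj_eq_zpow {G : Type*} [Group G] {g a : G} {k j : ℤ}
    (ha : ¬IsOfFinOrder a) (hk : g * a * g⁻¹ = a ^ k) (hj : g⁻¹ * a * g = a ^ j) :
    k = 1 ∨ k = -1 := by
  have hjk : a ^ (j * k) = a ^ (1 : ℤ) := by
    calc a ^ (j * k) = (g⁻¹ * a * g⁻¹⁻¹) ^ k := by rw [inv_inv, hj, zpow_mul]
      _ = a ^ (1 : ℤ) := by rw [conj_zpow, ← hk]; group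
  exact Int.eq_one_or_neg_one_of_mul_eq_one
    (mul_comm j k ▸ injective_zpow_iff_not_isOfFinOrder.mpr ha hjk)

theorem Matrix.eq_one_or_neg_one_of_conj_eq_zpow {n K : Type*} [Fintype n] [DecidableEq n]
    [CommRing K] {A B : Matrix n n K} {k j : ℤ} (hA : IsUnit A.det) (hB : IsUnit B.det)
    (hfin : ¬IsOfFinOrder A) (hk : B * A * B⁻¹ = A ^ k) (hj : B⁻¹ * A * B = A ^ j) :
    k = 1 ∨ k = -1 := by
  obtain ⟨a, rfl⟩ := (A.isUnit_iff_isUnit_det).mpr hA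
  obtain ⟨b, rfl⟩ := (B.isUnit_iff_isUnit_det).mpr hB
  simp only [← Matrix.coe_units_inv, ← Matrix.coe_units_zpow, ← Units.val_mul, Units.val_inj]
    at hk hj
  exact _root_.eq_one_or_neg_one_of_conj_eq_zpow (Units.isOfFinOrder_val.not.mp hfin) hk hj

theorem Rat.not_isOfFinOrder_cast {K : Type*} [Field K] [CharZero K] {q : ℚ} (hq1 : q ≠ 1)
    (hqm1 : q ≠ -1) : ¬IsOfFinOrder (q : K) := by
  rw [isOfFinOrder_iff_pow_eq_one]
  rintro ⟨n, hn, hqn⟩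
  have hqn' : q ^ n = 1 := by exact_mod_cast hqn
  rcases (pow_eq_one_iff_of_ne_zero hn.ne').mp hqn' with h | ⟨h, -⟩
  exacts [hq1 h, hqm1 h]

variable {K : Type} [Field K] {q : ℚ}

theorem Amat_det (hq0 : (q : K) ≠ 0) : (Amat K q).det = 1 := by
  simp [Amat, Matrix.det_fin_three, hq0]

theorem Amat_pow_apply_one_one (n : ℕ) : (Amat K q ^ n) 1 1 = (q : K) ^ n := by
  induction n with
  | zero => simp
  | succ n ih =>
    rw [pow_succ, Matrix.mul_apply, Fin.sum_univ_three, ih]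
    simp [Amat, pow_succ]

theorem Amat_not_isOfFinOrder (hq : ¬IsOfFinOrder (q : K)) : ¬IsOfFinOrder (Amat K q) := by
  simp only [isOfFinOrder_iff_pow_eq_one, not_exists, not_and] at hq ⊢
  intro n hn hA
  exact hq n hn (by rw [← Amat_pow_apply_one_one, hA, Matrix.one_apply_eq])

theorem eq_smul_one_of_commute_Amat_of_mul_unitriMat {B : Matrix (Fin 3) (Fin 3) K} {a b c : ℤ}
    (hq0 : (q : K) ≠ 0) (hq2 : (q : K) ^ 2 ≠ 1) (hA : B * Amat K q = Amat K q * B)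
    (hU : B * unitriMat K 1 0 0 = unitriMat K a b c * B) : B = B 0 0 • 1 := by
  rw [Matrix.eta_fin_three B] at hA hU
  simp only [Amat, unitriMat, Matrix.mul_fin_three, EmbeddingLike.apply_eq_iff_eq,
    Matrix.vecCons_inj, mul_zero, mul_one, zero_mul, one_mul, add_zero, zero_add, Int.cast_one,
    Int.cast_zero, and_true, true_and] at hA hU
  obtain ⟨⟨-, e01, e02⟩, ⟨e10, -, e12⟩, e20, e21, -⟩ := hA
  obtain ⟨-, ⟨-, f11, -⟩, f21⟩ := hU
  have hq1 : (q : K) ≠ 1 := fun h => hq2 (by rw [h, one_pow])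
  have hqq : (q : K) * (q : K)⁻¹ = 1 := mul_inv_cancel₀ hq0
  have hB01 : B 0 1 = 0 := (mul_right_eq_self₀.mp e01).resolve_left hq1
  have hB02 : B 0 2 = 0 := (mul_right_eq_self₀.mp e02).resolve_left (inv_ne_one.mpr hq1)
  have hB12 : B 1 2 = 0 := by
    refine (mul_eq_zero.mp ?_).resolve_right (sub_ne_zero.mpr hq2)
    linear_combination (-(q : K)) * e12 + B 1 2 * hqq - (q : K) * hB02
  have hB21 : B 2 1 = 0 := by
    refine (mul_eq_zero.mp ?_).resolve_right (sub_ne_zero.mpr hq2)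
    linear_combination (q : K) * e21 + B 2 1 * hqq + (q : K) * hB01
  have hB10 : B 1 0 = 0 := by linear_combination f11 + (c : K) * hB21
  have hB20 : B 2 0 = 0 := by linear_combination f21
  have hB11 : B 1 1 = B 0 0 := by linear_combination e10 + ((q : K) - 1) * hB10 - hB12
  have hB22 : B 2 2 = B 0 0 := by linear_combination e20 + ((q : K)⁻¹ - 1) * hB20 - hB21
  ext i j
  fin_cases i <;> fin_cases j <;> simp [hB01, hB02, hB10, hB12, hB20, hB21, hB11, hB22]

theorem det_eq_zero_of_Amat_mul_mul_Amat_of_mul_unitriMat {B : Matrix (Fin 3) (Fin 3) K}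
    {a b c : ℤ} (hq2 : (q : K) ^ 2 ≠ 1) (hA : Amat K q * B * Amat K q = B)
    (hU : B * unitriMat K 0 0 1 = unitriMat K a b c * B) : B.det = 0 := by
  rw [Matrix.eta_fin_three B] at hA hU
  simp only [Amat, unitriMat, Matrix.mul_fin_three, EmbeddingLike.apply_eq_iff_eq,
    Matrix.vecCons_inj, mul_zero, mul_one, zero_mul, one_mul, add_zero, zero_add, Int.cast_one,
    Int.cast_zero, and_true, true_and] at hA hU
  obtain ⟨⟨-, e01, -⟩, ⟨-, e11, -⟩, -⟩ := hA
  obtain ⟨-, -, f22⟩ := hU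
  have hq1 : (q : K) ≠ 1 := fun h => hq2 (by rw [h, one_pow])
  have hB01 : B 0 1 = 0 := (mul_right_eq_self₀.mp e01).resolve_left hq1
  have hB11 : B 1 1 = 0 := by
    refine (mul_right_eq_self₀.mp ?_).resolve_left hq2
    linear_combination e11 - (q : K) * hB01
  have hB21 : B 2 1 = 0 := by linear_combination f22
  rw [Matrix.det_fin_three, hB01, hB11, hB21]
  ring

/-- If `B ∈ GL(3,K)` satisfies `B⁻¹ Λ₂ B = Λ₂` and `B⁻¹ Σ B = Σ`,
where `Λ₂` is the group of integer upper unitriangular matrices and `Σ = {Aᵏ : k ∈ ℤ}`,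
then `B` is a scalar multiple of the identity matrix. -/
theorem scalar_of_normalizes_unitriangular_and_sigma (K : Type) [Field K] [CharZero K]
    (q : ℚ) (hq0 : q ≠ 0) (hq1 : q ≠ 1) (hqm1 : q ≠ -1)
    (B : Matrix (Fin 3) (Fin 3) K) (hB : IsUnit B.det)
    (hlam : ∀ m : Matrix (Fin 3) (Fin 3) K,
      (∃ a b c : ℤ, B * m * B⁻¹ = unitriMat K a b c) ↔ ∃ a b c : ℤ, m = unitriMat K a b c)
    (hsig : ∀ m : Matrix (Fin 3) (Fin 3) K,
      (∃ k : ℤ, B * m * B⁻¹ = Amat K q ^ k) ↔ ∃ k : ℤ, m = Amat K q ^ k) :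
    ∃ x : K, B = x • (1 : Matrix (Fin 3) (Fin 3) K) := by
  have hq0K : (q : K) ≠ 0 := by exact_mod_cast hq0
  have hqK : ¬IsOfFinOrder (q : K) := Rat.not_isOfFinOrder_cast hq1 hqm1
  have hq2 : (q : K) ^ 2 ≠ 1 := fun h => hqK (isOfFinOrder_iff_pow_eq_one.mpr ⟨2, two_pos, h⟩)
  have hA : IsUnit (Amat K q).det := by rw [Amat_det hq0K]; exact isUnit_one
  have conj_cancel (m : Matrix (Fin 3) (Fin 3) K) : B * (B⁻¹ * m * B) * B⁻¹ = m := by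
    simp only [← mul_assoc, B.mul_nonsing_inv hB, one_mul, B.mul_nonsing_inv_cancel_right _ hB]
  have semiconj {m Y : Matrix (Fin 3) (Fin 3) K} (h : B * m * B⁻¹ = Y) : B * m = Y * B := by
    rw [← h, B.nonsing_inv_mul_cancel_right _ hB]
  obtain ⟨k, hk⟩ := (hsig (Amat K q)).mpr ⟨1, (zpow_one _).symm⟩
  obtain ⟨j, hj⟩ := (hsig (B⁻¹ * Amat K q * B)).mp ⟨1, by rw [zpow_one, conj_cancel]⟩
  rcases Matrix.eq_one_or_neg_one_of_conj_eq_zpow hA hB (Amat_not_isOfFinOrder hqK) hk hj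
    with rfl | rfl
  · obtain ⟨a, b, c, hU⟩ := (hlam (unitriMat K 1 0 0)).mpr ⟨1, 0, 0, rfl⟩
    rw [zpow_one] at hk
    exact ⟨B 0 0,
      eq_smul_one_of_commute_Amat_of_mul_unitriMat hq0K hq2 (semiconj hk) (semiconj hU)⟩
  · obtain ⟨a, b, c, hU⟩ := (hlam (unitriMat K 0 0 1)).mpr ⟨0, 0, 1, rfl⟩
    rw [Matrix.zpow_neg_one] at hk
    have hAB : Amat K q * B * Amat K q = B := by
      rw [mul_assoc, semiconj hk, ← mul_assoc, (Amat K q).mul_nonsing_inv hA, one_mul]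
    exact absurd (det_eq_zero_of_Amat_mul_mul_Amat_of_mul_unitriMat hq2 hAB (semiconj hU))
      hB.ne_zero
end

section
/- Let K be a field of characteristic zero, q ∈ ℚ ∖ {0,1,−1}, A = [[1,0,0],[1,q,0],[1,0,q⁻¹]] ∈ GL(3,K), Σ = {Aᵏ : k ∈ ℤ}, and let Λ₂ ⊆ GL(3,K) denote the group of upper unitriangular 3×3 matrices with integer entries. Let β : GL(3,K) → GL(3,K) be the automorphism β(g) = (gᵀ)⁻¹ (inverse transpose). Then there exists no B ∈ GL(3,K) satisfying both B⁻¹β(Σ)B = Σ and B⁻¹β(Λ₂)B = Λ₂. -/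
open Matrix

/-!
If `B` conjugated `A` to `β(Aᵏ) = (A⁻ᵏ)ᵀ`, then, since `e₁` is an eigenvector of every power
of `A`, row 1 of `B` would be a left eigenvector of `A` (indices start at 0). Conjugating
`β(I - E₁₂) = I + E₂₁` into `Λ₂` forces `B 1 0 = 0`, and a left eigenvector of `A` with
vanishing first coordinate is zero because `q ≠ q⁻¹`. So `B` has a zero row.
-/

namespace Matrix

variable {n K : Type*} [Fintype n] [DecidableEq n] [Field K]

theorem zpow_mulVec_of_mulVec_eq_smul {A : Matrix n n K} (hA : IsUnit A.det) {v : n → K}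
    {c : K} (hc : c ≠ 0) (h : A *ᵥ v = c • v) (m : ℤ) : A ^ m *ᵥ v = c ^ m • v := by
  have hinv : A⁻¹ *ᵥ v = c⁻¹ • v := by
    rw [← inv_smul_smul₀ hc (A⁻¹ *ᵥ v), ← mulVec_smul, ← h, mulVec_mulVec,
      nonsing_inv_mul _ hA, one_mulVec]
  induction m using Int.induction_on with
  | zero => simp
  | succ i ih =>
    rw [zpow_add_one hA, ← mulVec_mulVec, h, mulVec_smul, ih, smul_smul, zpow_add_one₀ hc,
      mul_comm]
  | pred i ih =>
    rw [zpow_sub_one hA, ← mulVec_mulVec, hinv, mulVec_smul, ih, smul_smul, zpow_sub_one₀ hc,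
      mul_comm]

end Matrix

section

variable {K : Type} [Field K]

theorem det_Amat {q : ℚ} (hq : (q : K) ≠ 0) : (Amat K q).det = 1 := by
  simp [Amat, det_fin_three, hq]

theorem Amat_mulVec_single_one (q : ℚ) :
    Amat K q *ᵥ Pi.single 1 1 = (q : K) • Pi.single 1 1 := by
  ext i; fin_cases i <;> simp [Amat, mulVec, dotProduct, Fin.sum_univ_three]

theorem eq_zero_of_vecMul_Amat_eq_smul [CharZero K] {q : ℚ} (hq0 : q ≠ 0) (hq1 : q ≠ 1)
    (hqm1 : q ≠ -1) {r : Fin 3 → K} {t : K} (hr : r 0 = 0) (h : r ᵥ* Amat K q = t • r) :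
    r = 0 := by
  have e0 := congrFun h 0
  have e1 := congrFun h 1
  have e2 := congrFun h 2
  simp only [vecMul, dotProduct, Amat, Fin.isValue, of_apply, cons_val', cons_val_zero,
    cons_val_fin_one, Fin.sum_univ_three, hr, mul_one, cons_val_one, zero_add, cons_val,
    Pi.smul_apply, smul_eq_mul, mul_zero, add_zero] at e0 e1 e2
  have hq : (q : K) ≠ 0 := Rat.cast_ne_zero.mpr hq0
  have hr1 : r 1 = 0 := by
    by_contra hr1
    have ht : t = q := mul_right_cancel₀ hr1 (by linear_combination -e1)
    have hr2 : r 2 ≠ 0 := fun hr2 => hr1 (by linear_combination e0 - hr2)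
    have hinv : (q : K)⁻¹ = q := mul_right_cancel₀ hr2 (by linear_combination e2 + r 2 * ht)
    have hsq : (q : K) * q = 1 := by simpa only [hinv] using mul_inv_cancel₀ hq
    rcases mul_self_eq_one_iff.mp hsq with h | h
    · exact hq1 (by exact_mod_cast h)
    · exact hqm1 (by exact_mod_cast h)
  have hr2 : r 2 = 0 := by linear_combination e0 - hr1
  ext i; fin_cases i <;> assumption

theorem inv_transpose_unitriMat_zero_zero (c : ℤ) :
    ((unitriMat K 0 0 c)ᵀ)⁻¹ = !![1, 0, 0; 0, 1, 0; 0, -(c : K), 1] := by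
  refine inv_eq_right_inv ?_
  ext i j; fin_cases i <;> fin_cases j <;> simp [unitriMat, mul_apply, Fin.sum_univ_three]

theorem apply_one_zero_eq_zero_of_mul_eq_mul_unitriMat {B : Matrix (Fin 3) (Fin 3) K}
    {a b c : ℤ} (h : !![1, 0, 0; 0, 1, 0; 0, 1, 1] * B = B * unitriMat K a b c) : B 1 0 = 0 := by
  simpa [unitriMat, mul_apply, Fin.sum_univ_three] using congrFun (congrFun h 2) 0

end

/-- Let `β(g) = (gᵀ)⁻¹` be the inverse-transpose automorphism.
There is no `B ∈ GL(3,K)` with `B⁻¹ β(Σ) B = Σ` and `B⁻¹ β(Λ₂) B = Λ₂`, where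
`Σ = {Aᵏ : k ∈ ℤ}` and `Λ₂` is the group of integer upper unitriangular matrices. -/
theorem no_conjugation_between_beta_and_identity (K : Type) [Field K] [CharZero K]
    (q : ℚ) (hq0 : q ≠ 0) (hq1 : q ≠ 1) (hqm1 : q ≠ -1) :
    ¬ ∃ B : Matrix (Fin 3) (Fin 3) K, IsUnit B.det ∧
      (∀ m : Matrix (Fin 3) (Fin 3) K,
        (∃ k : ℤ, B * m * B⁻¹ = ((Amat K q ^ k)ᵀ)⁻¹) ↔ ∃ k : ℤ, m = Amat K q ^ k) ∧
      (∀ m : Matrix (Fin 3) (Fin 3) K,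
        (∃ a b c : ℤ, B * m * B⁻¹ = ((unitriMat K a b c)ᵀ)⁻¹) ↔
          ∃ a b c : ℤ, m = unitriMat K a b c) := by
  rintro ⟨B, hB, hSigma, hLambda⟩
  have hq : (q : K) ≠ 0 := Rat.cast_ne_zero.mpr hq0
  have hA : IsUnit (Amat K q).det := by rw [det_Amat hq]; exact isUnit_one
  have := B.invertibleOfIsUnitDet hB
  obtain ⟨k, hk⟩ := (hSigma (Amat K q)).2 ⟨1, (zpow_one _).symm⟩
  rw [mul_inv_eq_iff_eq_mul_of_invertible, ← transpose_nonsing_inv, ← zpow_neg hA] at hk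
  obtain ⟨a, b, c, hU⟩ := (hLambda (B⁻¹ * !![1, 0, 0; 0, 1, 0; 0, 1, 1] * B)).1
    ⟨0, 0, -1, by simp [inv_transpose_unitriMat_zero_zero, mul_assoc]⟩
  rw [mul_assoc, inv_mul_eq_iff_eq_mul_of_invertible] at hU
  have hrow : B.row 1 ᵥ* Amat K q = (q : K) ^ (-k) • B.row 1 := by
    rw [← single_one_vecMul, vecMul_vecMul, hk, ← vecMul_vecMul, vecMul_transpose,
      zpow_mulVec_of_mulVec_eq_smul hA hq (Amat_mulVec_single_one q), smul_vecMul,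
      single_one_vecMul]
  have hrow0 := eq_zero_of_vecMul_Amat_eq_smul hq0 hq1 hqm1
    (apply_one_zero_eq_zero_of_mul_eq_mul_unitriMat hU) hrow
  exact hB.ne_zero (det_eq_zero_of_row_eq_zero 1 (congrFun hrow0))
end
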